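/- arXiv:2303.00375 — 7 statements merged into one kernel-verified Lean document; each statement's English description precedes it below -/
import Mathlib

section
/- For all integers r ≥ 2, q₁ ≥ p₁ ≥ r and q₂ ≥ p₂ ≥ r, one has t_r(q₁ + q₂, p₁ + p₂ − 1) ≥ min{ t_r(q₁, p₁), t_r(q₂, p₂) }. -/
open Filter

/-- An r-uniform hypergraph `G` on vertex set `Fin n` has the (q,p)-property if every
q-element vertex subset `A` contains a p-element subset `B` such that every
r-element subset of `B` is an edge of `G`. -/
def HasLocalProperty {n : ℕ} (G : Finset (Finset (Fin n))) (r q p : ℕ) : Prop :=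
  ∀ A : Finset (Fin n), A.card = q →
    ∃ B ⊆ A, B.card = p ∧ ∀ e ⊆ B, e.card = r → e ∈ G

/-- `minEdges r n q p` = T_r(n,q,p): the minimum number of edges of an n-vertex
r-uniform hypergraph having the (q,p)-property. -/
noncomputable def minEdges (r n q p : ℕ) : ℕ :=
  sInf {m | ∃ G : Finset (Finset (Fin n)), (∀ e ∈ G, e.card = r) ∧
    HasLocalProperty G r q p ∧ G.card = m}

/-- `tDensity r q p` = t_r(q,p) = lim_{n→∞} T_r(n,q,p)/C(n,r), which equals the
supremum since the sequence is nondecreasing and bounded. -/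
noncomputable def tDensity (r q p : ℕ) : ℝ :=
  ⨆ n : ℕ, (minEdges r n q p : ℝ) / (n.choose r)

-- complete graph witness
lemma complete_mem (r n q p : ℕ) (hpq : p ≤ q) :
    (Finset.univ.powersetCard r : Finset (Finset (Fin n))).card ∈
      {m | ∃ G : Finset (Finset (Fin n)), (∀ e ∈ G, e.card = r) ∧
        HasLocalProperty G r q p ∧ G.card = m} := by
  refine ⟨_, ?_, ?_, rfl⟩
  · intro e he; exact (Finset.mem_powersetCard.mp he).2
  · intro A hA
    obtain ⟨B, hBA, hB⟩ := Finset.exists_subset_card_eq (show p ≤ A.card from hA ▸ hpq)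
    exact ⟨B, hBA, hB, fun e _ he => Finset.mem_powersetCard.mpr ⟨e.subset_univ, he⟩⟩

lemma minEdges_exists (r n q p : ℕ) (hpq : p ≤ q) :
    ∃ G : Finset (Finset (Fin n)), (∀ e ∈ G, e.card = r) ∧
      HasLocalProperty G r q p ∧ G.card = minEdges r n q p :=
  Nat.sInf_mem ⟨_, complete_mem r n q p hpq⟩

lemma minEdges_le {r n q p : ℕ} {G : Finset (Finset (Fin n))}
    (hG : ∀ e ∈ G, e.card = r) (hprop : HasLocalProperty G r q p) :
    minEdges r n q p ≤ G.card :=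
  Nat.sInf_le ⟨G, hG, hprop, rfl⟩

lemma minEdges_le_choose (r n q p : ℕ) (hpq : p ≤ q) :
    minEdges r n q p ≤ n.choose r := by
  obtain ⟨G, h1, h2, hc⟩ := complete_mem r n q p hpq
  calc minEdges r n q p ≤ G.card := minEdges_le h1 h2
    _ = n.choose r := by simp [hc, Finset.card_powersetCard]

-- Transfer to an induced subgraph on a vertex subset S.
lemma minEdges_le_filter {r n q p : ℕ} (G : Finset (Finset (Fin n)))
    (S : Finset (Fin n))
    (hprop : ∀ A ⊆ S, A.card = q → ∃ B ⊆ A, B.card = p ∧ ∀ e ⊆ B, e.card = r → e ∈ G) :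
    minEdges r S.card q p ≤ (G.filter (fun e => e ⊆ S)).card := by
  classical
  set f : Fin S.card → Fin n := fun i => (S.orderIsoOfFin rfl i : Fin n) with hf
  have hfi : Function.Injective f := fun a b h => by
    apply (S.orderIsoOfFin rfl).injective; exact Subtype.ext h
  have hfS : ∀ i, f i ∈ S := fun i => (S.orderIsoOfFin rfl i).2
  set G' : Finset (Finset (Fin S.card)) :=
    Finset.univ.filter (fun t => t.card = r ∧ t.image f ∈ G) with hG'
  have hmem : ∀ t : Finset (Fin S.card), t ∈ G' ↔ t.card = r ∧ t.image f ∈ G := by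
    intro t; simp [hG']
  have hGcard : ∀ e ∈ G', e.card = r := fun e he => ((hmem e).mp he).1
  have hGprop : HasLocalProperty G' r q p := by
    intro A' hA'
    have hsub : A'.image f ⊆ S := fun x hx => by
      obtain ⟨i, _, rfl⟩ := Finset.mem_image.mp hx; exact hfS i
    have hcard : (A'.image f).card = q := by
      rw [Finset.card_image_of_injective _ hfi, hA']
    obtain ⟨B, hBA, hBcard, hBcl⟩ := hprop (A'.image f) hsub hcard
    refine ⟨A'.filter (fun i => f i ∈ B), Finset.filter_subset _ _, ?_, ?_⟩
    · have himg : (A'.filter (fun i => f i ∈ B)).image f = B := by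
        apply Finset.Subset.antisymm
        · intro x hx
          obtain ⟨i, hi, rfl⟩ := Finset.mem_image.mp hx
          exact (Finset.mem_filter.mp hi).2
        · intro b hb
          obtain ⟨i, hi, rfl⟩ := Finset.mem_image.mp (hBA hb)
          exact Finset.mem_image.mpr ⟨i, Finset.mem_filter.mpr ⟨hi, hb⟩, rfl⟩
      rw [← Finset.card_image_of_injective _ hfi, himg, hBcard]
    · intro e he hecard
      refine (hmem e).mpr ⟨hecard, ?_⟩
      apply hBcl
      · intro x hx
        obtain ⟨i, hi, rfl⟩ := Finset.mem_image.mp hx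
        exact (Finset.mem_filter.mp (he hi)).2
      · rw [Finset.card_image_of_injective _ hfi, hecard]
  have hG'le : G'.card ≤ (G.filter (fun e => e ⊆ S)).card := by
    apply Finset.card_le_card_of_injOn (fun t => t.image f)
    · intro t ht
      refine Finset.mem_filter.mpr ⟨((hmem t).mp ht).2, fun x hx => ?_⟩
      obtain ⟨i, _, rfl⟩ := Finset.mem_image.mp hx; exact hfS i
    · intro a _ b _ hab
      exact Finset.image_injective hfi hab
  exact le_trans (minEdges_le hGcard hGprop) hG'le

lemma minEdges_le_of_subset {r n q p : ℕ} (G : Finset (Finset (Fin n)))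
    (S : Finset (Fin n))
    (hprop : ∀ A ⊆ S, A.card = q → ∃ B ⊆ A, B.card = p ∧ ∀ e ⊆ B, e.card = r → e ∈ G) :
    minEdges r S.card q p ≤ G.card :=
  le_trans (minEdges_le_filter G S hprop) (Finset.card_le_card (Finset.filter_subset _ _))

lemma minEdges_mono (r q p : ℕ) (hpq : p ≤ q) : Monotone (fun n => minEdges r n q p) := by
  apply monotone_nat_of_le_succ
  intro n
  obtain ⟨G, hGr, hGp, hGc⟩ := minEdges_exists r (n + 1) q p hpq
  obtain ⟨S, _, hScard⟩ := Finset.exists_subset_card_eq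
    (show n ≤ (Finset.univ : Finset (Fin (n+1))).card by simp)
  have := minEdges_le_of_subset G S (fun A _ hA => hGp A hA)
  rw [hScard] at this
  exact hGc ▸ this

lemma counting (r n q p : ℕ) (hpq : p ≤ q) :
    (n + 1) * minEdges r n q p ≤ (n + 1 - r) * minEdges r (n + 1) q p := by
  classical
  obtain ⟨G, hGr, hGp, hGc⟩ := minEdges_exists r (n + 1) q p hpq
  have key : ∀ v : Fin (n + 1),
      minEdges r n q p ≤ (G.filter (fun e => e ⊆ Finset.univ.erase v)).card := by
    intro v
    have hcard : (Finset.univ.erase v).card = n := by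
      rw [Finset.card_erase_of_mem (Finset.mem_univ v)]; simp
    have := minEdges_le_filter G (Finset.univ.erase v) (fun A _ hA => hGp A hA)
    rwa [hcard] at this
  have hsum : ∑ v : Fin (n + 1), (G.filter (fun e => e ⊆ Finset.univ.erase v)).card
      = (n + 1 - r) * G.card := by
    have h1 : ∀ v : Fin (n+1), ∀ e : Finset (Fin (n+1)),
        (e ⊆ Finset.univ.erase v) ↔ v ∉ e := by
      intro v e
      rw [Finset.subset_erase]
      simp
    calc ∑ v : Fin (n + 1), (G.filter (fun e => e ⊆ Finset.univ.erase v)).card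
        = ∑ v : Fin (n + 1), ∑ e ∈ G, (if v ∉ e then 1 else 0) := by
          refine Finset.sum_congr rfl fun v _ => ?_
          rw [Finset.card_filter]
          exact Finset.sum_congr rfl fun e _ => by simp [h1 v e]
      _ = ∑ e ∈ G, ∑ v : Fin (n + 1), (if v ∉ e then 1 else 0) := Finset.sum_comm
      _ = ∑ e ∈ G, (n + 1 - r) := by
          refine Finset.sum_congr rfl fun e he => ?_
          rw [← Finset.card_filter]
          have : Finset.univ.filter (fun v => v ∉ e) = eᶜ := by
            ext v; simp [Finset.mem_compl]
          rw [this, Finset.card_compl, hGr e he]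
          simp
      _ = (n + 1 - r) * G.card := by rw [Finset.sum_const, smul_eq_mul, mul_comm]
  calc (n + 1) * minEdges r n q p = ∑ _v : Fin (n + 1), minEdges r n q p := by
        rw [Finset.sum_const, Finset.card_univ, Fintype.card_fin, smul_eq_mul]
    _ ≤ ∑ v : Fin (n + 1), (G.filter (fun e => e ⊆ Finset.univ.erase v)).card :=
        Finset.sum_le_sum fun v _ => key v
    _ = (n + 1 - r) * G.card := hsum
    _ = (n + 1 - r) * minEdges r (n + 1) q p := by rw [hGc]



noncomputable def density (r q p n : ℕ) : ℝ := (minEdges r n q p : ℝ) / (n.choose r)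

lemma density_nonneg (r q p n : ℕ) : 0 ≤ density r q p n := by
  unfold density; positivity

lemma density_le_one (r q p n : ℕ) (hpq : p ≤ q) : density r q p n ≤ 1 := by
  unfold density
  rcases le_or_gt r n with h | h
  · rw [div_le_one (by exact_mod_cast Nat.choose_pos h)]
    exact_mod_cast minEdges_le_choose r n q p hpq
  · rw [Nat.choose_eq_zero_of_lt h]
    simp

lemma density_monotone (r q p : ℕ) (hpq : p ≤ q) : Monotone (density r q p) := by
  apply monotone_nat_of_le_succ
  intro n
  rcases lt_or_ge n r with h | h
  · unfold density
    rw [Nat.choose_eq_zero_of_lt h]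
    simp
    positivity
  · have hnat : minEdges r n q p * (n + 1).choose r ≤ minEdges r (n + 1) q p * n.choose r := by
      have h1 := counting r n q p hpq
      have h2 : (n + 1) * (minEdges r n q p * (n + 1).choose r)
          ≤ (n + 1) * (minEdges r (n + 1) q p * n.choose r) := by
        calc (n + 1) * (minEdges r n q p * (n + 1).choose r)
            = ((n + 1) * minEdges r n q p) * (n + 1).choose r := by ring
          _ ≤ ((n + 1 - r) * minEdges r (n + 1) q p) * (n + 1).choose r :=
              Nat.mul_le_mul_right _ h1
          _ = minEdges r (n + 1) q p * ((n + 1).choose r * (n + 1 - r)) := by ring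
          _ = minEdges r (n + 1) q p * (n.choose r * (n + 1)) := by
              rw [← Nat.choose_mul_succ_eq]
          _ = (n + 1) * (minEdges r (n + 1) q p * n.choose r) := by ring
      exact Nat.le_of_mul_le_mul_left h2 (Nat.succ_pos n)
    unfold density
    rw [div_le_div_iff₀ (by exact_mod_cast Nat.choose_pos h)
      (by exact_mod_cast Nat.choose_pos (le_trans h (Nat.le_succ n)))]
    exact_mod_cast hnat

lemma density_bddAbove (r q p : ℕ) (hpq : p ≤ q) : BddAbove (Set.range (density r q p)) :=
  ⟨1, fun x ⟨n, hn⟩ => hn ▸ density_le_one r q p n hpq⟩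

lemma density_tendsto (r q p : ℕ) (hpq : p ≤ q) :
    Tendsto (density r q p) atTop (nhds (tDensity r q p)) := by
  have : tDensity r q p = ⨆ n, density r q p n := rfl
  rw [this]
  exact tendsto_atTop_ciSup (density_monotone r q p hpq) (density_bddAbove r q p hpq)

lemma density_le_tDensity (r q p n : ℕ) (hpq : p ≤ q) :
    density r q p n ≤ tDensity r q p :=
  le_ciSup (density_bddAbove r q p hpq) n

-- The key dichotomy
lemma dichotomy (r q₁ p₁ q₂ p₂ n : ℕ) (hr : 1 ≤ r)
    (h₁ : p₁ ≤ q₁) (h₁' : 1 ≤ p₁) (h₂ : p₂ ≤ q₂) (hn : q₁ + q₂ ≤ n) :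
    minEdges r n q₁ p₁ ≤ minEdges r n (q₁ + q₂) (p₁ + p₂ - 1) ∨
    minEdges r (n - q₁) q₂ p₂ ≤ minEdges r n (q₁ + q₂) (p₁ + p₂ - 1) := by
  classical
  have hPQ : p₁ + p₂ - 1 ≤ q₁ + q₂ := by omega
  obtain ⟨G, hGr, hGp, hGc⟩ := minEdges_exists r n (q₁ + q₂) (p₁ + p₂ - 1) hPQ
  by_cases hcase : HasLocalProperty G r q₁ p₁
  · left
    exact hGc ▸ minEdges_le hGr hcase
  · right
    rw [HasLocalProperty] at hcase
    push_neg at hcase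
    obtain ⟨A₁, hA₁card, hA₁bad⟩ := hcase
    have hScard : (A₁ᶜ : Finset (Fin n)).card = n - q₁ := by
      rw [Finset.card_compl, hA₁card]; simp
    rw [← hScard, ← hGc]
    apply minEdges_le_of_subset G A₁ᶜ
    intro A₂ hA₂S hA₂card
    have hdisj : Disjoint A₁ A₂ := by
      rw [Finset.disjoint_right]
      intro a ha
      exact Finset.mem_compl.mp (hA₂S ha)
    have hunion : (A₁ ∪ A₂).card = q₁ + q₂ := by
      rw [Finset.card_union_of_disjoint hdisj, hA₁card, hA₂card]
    obtain ⟨B, hBsub, hBcard, hBcl⟩ := hGp (A₁ ∪ A₂) hunion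
    have hBA₁ : (B ∩ A₁).card < p₁ := by
      by_contra hge
      push_neg at hge
      obtain ⟨B₁, hB₁sub, hB₁card⟩ := Finset.exists_subset_card_eq hge
      obtain ⟨e, he, hec, heG⟩ := hA₁bad B₁ (hB₁sub.trans Finset.inter_subset_right) hB₁card
      exact heG (hBcl e (he.trans (hB₁sub.trans Finset.inter_subset_left)) hec)
    have hBA₂ : p₂ ≤ (B ∩ A₂).card := by
      have hsplit : B.card ≤ (B ∩ A₁).card + (B ∩ A₂).card := by
        calc B.card = ((B ∩ A₁) ∪ (B ∩ A₂)).card := by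
              congr 1
              rw [← Finset.inter_union_distrib_left]
              exact (Finset.inter_eq_left.mpr hBsub).symm
          _ ≤ (B ∩ A₁).card + (B ∩ A₂).card := Finset.card_union_le _ _
      omega
    obtain ⟨B₂, hB₂sub, hB₂card⟩ := Finset.exists_subset_card_eq hBA₂
    refine ⟨B₂, hB₂sub.trans Finset.inter_subset_right, hB₂card, fun e he hec =>
      hBcl e (he.trans (hB₂sub.trans Finset.inter_subset_left)) hec⟩

lemma choose_ratio_nat (r m n : ℕ) :
    (m + 1 - r) ^ r * n.choose r ≤ m.choose r * n ^ r := by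
  have key : ((m + 1 - r) ^ r * n.choose r) * r.factorial
      ≤ (m.choose r * n ^ r) * r.factorial := by
    calc ((m + 1 - r) ^ r * n.choose r) * r.factorial
        = (m + 1 - r) ^ r * (r.factorial * n.choose r) := by ring
      _ = (m + 1 - r) ^ r * n.descFactorial r := by
          rw [← Nat.descFactorial_eq_factorial_mul_choose]
      _ ≤ m.descFactorial r * n ^ r :=
          Nat.mul_le_mul (Nat.pow_sub_le_descFactorial m r) (Nat.descFactorial_le_pow n r)
      _ = (r.factorial * m.choose r) * n ^ r := by
          rw [← Nat.descFactorial_eq_factorial_mul_choose]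
      _ = (m.choose r * n ^ r) * r.factorial := by ring
  exact Nat.le_of_mul_le_mul_right key r.factorial_pos

lemma case2_bound (r q₂ p₂ Q P m n : ℕ) (hr : 1 ≤ r) (hrm : r ≤ m) (hrn : r ≤ n)
    (hT : minEdges r m q₂ p₂ ≤ minEdges r n Q P) :
    density r q₂ p₂ m * (((m + 1 - r : ℕ) : ℝ) / n) ^ r ≤ density r Q P n := by
  have hCm : (0:ℝ) < m.choose r := by exact_mod_cast Nat.choose_pos hrm
  have hCn : (0:ℝ) < n.choose r := by exact_mod_cast Nat.choose_pos hrn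
  have hn : (0:ℝ) < n := by exact_mod_cast lt_of_lt_of_le hr hrn
  set ρ : ℝ := (((m + 1 - r : ℕ) : ℝ) / n) ^ r with hρ
  have hρnn : 0 ≤ ρ := by positivity
  have hratio : ρ * (n.choose r : ℝ) ≤ (m.choose r : ℝ) := by
    have hc : (((m + 1 - r : ℕ):ℝ))^r * (n.choose r : ℝ) ≤ (m.choose r:ℝ) * (n:ℝ)^r := by
      exact_mod_cast choose_ratio_nat r m n
    rw [hρ, div_pow, div_mul_eq_mul_div, div_le_iff₀ (by positivity)]
    exact hc
  have step1 : density r q₂ p₂ m * ρ ≤ (minEdges r m q₂ p₂ : ℝ) / (n.choose r) := by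
    unfold density
    rw [div_mul_eq_mul_div, div_le_div_iff₀ hCm hCn]
    calc (minEdges r m q₂ p₂ : ℝ) * ρ * (n.choose r)
        = (minEdges r m q₂ p₂ : ℝ) * (ρ * (n.choose r)) := by ring
      _ ≤ (minEdges r m q₂ p₂ : ℝ) * (m.choose r) :=
          mul_le_mul_of_nonneg_left hratio (by positivity)
  have step2 : (minEdges r m q₂ p₂ : ℝ) / (n.choose r) ≤ density r Q P n := by
    unfold density
    gcongr
  exact le_trans step1 step2

/-- For integers r ≥ 2, q₁ ≥ p₁ ≥ r, q₂ ≥ p₂ ≥ r,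
t_r(q₁+q₂, p₁+p₂−1) ≥ min{t_r(q₁,p₁), t_r(q₂,p₂)}. -/
theorem tDensity_add_ge_min (r q₁ p₁ q₂ p₂ : ℕ) (hr : 2 ≤ r)
    (h₁ : p₁ ≤ q₁) (h₁' : r ≤ p₁) (h₂ : p₂ ≤ q₂) (h₂' : r ≤ p₂) :
    min (tDensity r q₁ p₁) (tDensity r q₂ p₂) ≤
      tDensity r (q₁ + q₂) (p₁ + p₂ - 1) := by
  set Q := q₁ + q₂ with hQ
  set P := p₁ + p₂ - 1 with hP
  have hPQ : P ≤ Q := by omega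
  set a : ℕ → ℝ := density r q₁ p₁ with ha_def
  set b : ℕ → ℝ := fun n => density r q₂ p₂ (n - q₁) with hb_def
  set ρ : ℕ → ℝ := fun n => ((n - q₁ + 1 - r : ℕ) : ℝ) / n with hρ_def
  set g : ℕ → ℝ := fun n => b n * (ρ n) ^ r with hg_def
  -- the pointwise inequality
  have hineq : ∀ n, q₁ + q₂ + r ≤ n → min (a n) (g n) ≤ density r Q P n := by
    intro n hn
    rcases dichotomy r q₁ p₁ q₂ p₂ n (by omega) h₁ (by omega) h₂ (by omega) with h | h
    · refine le_trans (min_le_left _ _) ?_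
      rw [ha_def]
      unfold density
      gcongr
    · refine le_trans (min_le_right _ _) ?_
      exact case2_bound r q₂ p₂ Q P (n - q₁) n (by omega) (by omega) (by omega) h
  -- limits
  have ha : Tendsto a atTop (nhds (tDensity r q₁ p₁)) := density_tendsto r q₁ p₁ h₁
  have hb : Tendsto b atTop (nhds (tDensity r q₂ p₂)) :=
    (density_tendsto r q₂ p₂ h₂).comp (tendsto_sub_atTop_nat q₁)
  have hρ : Tendsto ρ atTop (nhds 1) := by
    set c : ℝ := ((q₁ + r - 1 : ℕ) : ℝ) with hc
    have h1 : Tendsto (fun n : ℕ => 1 - c / n) atTop (nhds (1 - 0)) :=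
      tendsto_const_nhds.sub (tendsto_const_div_atTop_nhds_zero_nat c)
    rw [sub_zero] at h1
    apply h1.congr'
    filter_upwards [eventually_ge_atTop (q₁ + r)] with n hn
    have hnn : (0:ℝ) < n := by
      have : 0 < n := by omega
      exact_mod_cast this
    have hnat : n - q₁ + 1 - r = n - (q₁ + r - 1) := by omega
    show 1 - c / n = ((n - q₁ + 1 - r : ℕ) : ℝ) / n
    have hcast : ((n - q₁ + 1 - r : ℕ) : ℝ) = (n : ℝ) - c := by
      rw [hnat, Nat.cast_sub (by omega), hc]
    rw [hcast, sub_div, div_self (ne_of_gt hnn)]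
  have hg : Tendsto g atTop (nhds (tDensity r q₂ p₂)) := by
    have := hb.mul ((hρ.pow r))
    simpa using this
  have hmin : Tendsto (fun n => min (a n) (g n)) atTop
      (nhds (min (tDensity r q₁ p₁) (tDensity r q₂ p₂))) := ha.min hg
  apply le_of_tendsto hmin
  filter_upwards [eventually_ge_atTop (q₁ + q₂ + r)] with n hn
  exact le_trans (hineq n hn) (density_le_tDensity r Q P n hPQ)
end

section
/- Let H be a hypergraph on vertex set [t] = {1,…,t} and let r ≥ 2 be an integer. Then for every integer q ≥ r and every r-uniform hypergraph G ∈ F(H,r), G has the (q, ⌈q·f(H)⌉)-property. -/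
open Filter

/-- For a hypergraph `H` on vertex set `V` and a weight vector `x`,
`fFun H x = max_{e ∈ H} Σ_{i ∈ e} x_i`. -/
noncomputable def fFun {V : Type*} (H : Finset (Finset V)) (x : V → ℝ) : ℝ :=
  sSup ((fun e : Finset V => ∑ i ∈ e, x i) '' (H : Set (Finset V)))

/-- `fMin H = f(H)`, the minimum of `fFun H` over the standard simplex. -/
noncomputable def fMin {V : Type*} [Fintype V] (H : Finset (Finset V)) : ℝ :=
  sInf (fFun H '' stdSimplex ℝ V)

open Classical in
/-- For a hypergraph `H` on `V`, an integer `r` and a weight vector `x`,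
`gFun H r x = Σ_{(y₁,…,y_r) ∈ V^r} (Π_i x_{y_i}) · σ_H(y₁,…,y_r)`, where
`σ_H(y) = 1` iff some edge of `H` contains all the `y_i`. -/
noncomputable def gFun {V : Type*} [Fintype V] (H : Finset (Finset V)) (r : ℕ)
    (x : V → ℝ) : ℝ :=
  ∑ y : Fin r → V, (∏ i, x (y i)) * (if ∃ e ∈ H, ∀ i, y i ∈ e then (1 : ℝ) else 0)

/-- `gMin H r = g(H,r)`, the minimum of `gFun H r` over the standard simplex. -/
noncomputable def gMin {V : Type*} [Fintype V] (H : Finset (Finset V)) (r : ℕ) : ℝ :=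
  sInf (gFun H r '' stdSimplex ℝ V)

open Classical in
/-- The blow-up construction: the r-uniform hypergraph on `Fin n` obtained from a
hypergraph `H` on `Fin t` via the partition `V_i = φ⁻¹(i)`; its edges are the
r-element sets contained in `∪_{i ∈ e} V_i` for some edge `e` of `H`. -/
noncomputable def blowup {t : ℕ} (H : Finset (Finset (Fin t))) (r n : ℕ)
    (φ : Fin n → Fin t) : Finset (Finset (Fin n)) :=
  (Finset.powersetCard r Finset.univ).filter (fun A => ∃ e ∈ H, ∀ w ∈ A, φ w ∈ e)

/-- `rhoN H r n = ρ(H,r,n)`: the minimum edge density |G|/C(n,r) over all members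
of the family F(H,r) on n vertices. -/
noncomputable def rhoN {t : ℕ} (H : Finset (Finset (Fin t))) (r n : ℕ) : ℝ :=
  sInf {y : ℝ | ∃ φ : Fin n → Fin t, y = ((blowup H r n φ).card : ℝ) / (n.choose r)}

/-- `rho H r = ρ(H,r) = lim_{n→∞} ρ(H,r,n)`, which equals the supremum since the
sequence is nondecreasing and bounded. -/
noncomputable def rho {t : ℕ} (H : Finset (Finset (Fin t))) (r : ℕ) : ℝ :=
  ⨆ n : ℕ, rhoN H r n

/-- Every member of the blow-up family F(H,r) has the (q, ⌈q·f(H)⌉)-property. -/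
theorem blowup_hasLocalProperty (t r : ℕ) (hr : 2 ≤ r) (H : Finset (Finset (Fin t)))
    (q : ℕ) (hq : r ≤ q) (n : ℕ) (φ : Fin n → Fin t) :
    HasLocalProperty (blowup H r n φ) r q ⌈(q : ℝ) * fMin H⌉₊ := by
  classical
  intro A hA
  have hq0 : 0 < q := by omega
  by_cases hH : H.Nonempty
  · -- define the weight vector
    set x : Fin t → ℝ := fun i => ((A.filter fun w => φ w = i).card : ℝ) / q with hxdef
    have hsumcard : ∑ i : Fin t, ((A.filter fun w => φ w = i).card : ℝ) = q := by
      have := Finset.card_eq_sum_card_fiberwise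
        (f := φ) (s := A) (t := Finset.univ) (fun w _ => Finset.mem_univ _)
      rw [hA] at this
      exact_mod_cast this.symm
    have hx : x ∈ stdSimplex ℝ (Fin t) := by
      constructor
      · intro i
        exact div_nonneg (Nat.cast_nonneg _) (Nat.cast_nonneg _)
      · simp only [hxdef]
        rw [← Finset.sum_div, hsumcard, div_self (by positivity)]
    -- the image set in fFun is finite and nonempty
    have hSfin : ∀ y : Fin t → ℝ,
        ((fun e : Finset (Fin t) => ∑ i ∈ e, y i) '' (H : Set (Finset (Fin t)))).Finite :=
      fun y => (H.finite_toSet).image _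
    have hSne : ∀ y : Fin t → ℝ,
        ((fun e : Finset (Fin t) => ∑ i ∈ e, y i) '' (H : Set (Finset (Fin t)))).Nonempty :=
      fun y => (Set.Nonempty.image _ (by exact_mod_cast hH))
    -- fFun is nonneg on the simplex
    have hfnonneg : ∀ y ∈ stdSimplex ℝ (Fin t), 0 ≤ fFun H y := by
      intro y hy
      obtain ⟨e0, he0⟩ := hH
      have h1 : (0:ℝ) ≤ ∑ i ∈ e0, y i := Finset.sum_nonneg fun i _ => hy.1 i
      have h2 : ∑ i ∈ e0, y i ≤ fFun H y :=
        le_csSup ((hSfin y).bddAbove) ⟨e0, by simpa using he0, rfl⟩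
      linarith
    have hmin : fMin H ≤ fFun H x :=
      csInf_le ⟨0, by rintro z ⟨y, hy, rfl⟩; exact hfnonneg y hy⟩ ⟨x, hx, rfl⟩
    -- fFun H x is attained at some edge e
    have hmem := Set.Nonempty.csSup_mem (hSne x) (hSfin x)
    obtain ⟨e, heH, hesum⟩ := hmem
    have heH' : e ∈ H := by simpa using heH
    -- the set C
    set C : Finset (Fin n) := A.filter (fun w => φ w ∈ e) with hC
    have hCcard : (C.card : ℝ) = ∑ i ∈ e, ((A.filter fun w => φ w = i).card : ℝ) := by
      have h1 : C.card = ∑ i ∈ e, (C.filter fun w => φ w = i).card :=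
        Finset.card_eq_sum_card_fiberwise (fun w hw => (Finset.mem_filter.mp hw).2)
      have h2 : ∀ i ∈ e, (C.filter fun w => φ w = i) = A.filter fun w => φ w = i := by
        intro i hi
        ext w
        simp only [hC, Finset.mem_filter, and_assoc]
        constructor
        · rintro ⟨hw, -, h⟩; exact ⟨hw, h⟩
        · rintro ⟨hw, h⟩; exact ⟨hw, h ▸ hi, h⟩
      rw [h1, Finset.sum_congr rfl fun i hi => by rw [h2 i hi]]
      push_cast; ring
    have hCge : (q : ℝ) * fMin H ≤ C.card := by
      have hsum : ∑ i ∈ e, x i = fFun H x := hesum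
      have : (q : ℝ) * fMin H ≤ q * ∑ i ∈ e, x i := by
        rw [hsum]
        exact mul_le_mul_of_nonneg_left hmin (Nat.cast_nonneg _)
      calc (q : ℝ) * fMin H ≤ q * ∑ i ∈ e, x i := this
        _ = ∑ i ∈ e, ((A.filter fun w => φ w = i).card : ℝ) := by
            rw [Finset.mul_sum]
            refine Finset.sum_congr rfl fun i _ => ?_
            simp only [hxdef]
            field_simp
        _ = C.card := hCcard.symm
    have hceil : ⌈(q : ℝ) * fMin H⌉₊ ≤ C.card := Nat.ceil_le.mpr hCge
    obtain ⟨B, hBC, hBcard⟩ := Finset.exists_subset_card_eq hceil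
    refine ⟨B, hBC.trans (Finset.filter_subset _ _), hBcard, ?_⟩
    intro e' he' hcard
    rw [blowup, Finset.mem_filter, Finset.mem_powersetCard]
    exact ⟨⟨Finset.subset_univ _, hcard⟩, e, heH',
      fun w hw => (Finset.mem_filter.mp (hBC (he' hw))).2⟩
  · -- H is empty
    have hHe : H = ∅ := Finset.not_nonempty_iff_eq_empty.mp hH
    have hf : fMin H = 0 := by
      have h1 : ∀ y, fFun H y = 0 := by
        intro y; simp [fFun, hHe, Real.sSup_empty]
      rcases (stdSimplex ℝ (Fin t)).eq_empty_or_nonempty with h | h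
      · simp [fMin, h, Real.sInf_empty]
      · obtain ⟨z, hz⟩ := h
        have : fFun H '' stdSimplex ℝ (Fin t) = {0} := by
          apply Set.eq_singleton_iff_nonempty_unique_mem.mpr
          exact ⟨⟨0, z, hz, h1 z⟩, by rintro w ⟨y, -, rfl⟩; exact h1 y⟩
        simp [fMin, this]
    refine ⟨∅, Finset.empty_subset A, by simp [hf], ?_⟩
    intro e he hcard
    have : e = ∅ := Finset.subset_empty.mp he
    rw [this] at hcard
    simp at hcard
    omega
end

section
/- Let H be a hypergraph on vertex set [t] = {1,…,t} with f(H) > 0, let r ≥ 2 be an integer, and set γ = 1/f(H). Then limsup_{q→∞} t_r(q, ⌈q/γ⌉) ≤ ρ(H,r). -/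
open Filter

section Aux
variable {t : ℕ} (H : Finset (Finset (Fin t)))

lemma fFun_nonneg (hH : H.Nonempty) {x : Fin t → ℝ} (hx : ∀ i, 0 ≤ x i) : 0 ≤ fFun H x := by
  obtain ⟨e, he⟩ := hH
  have hfin : ((fun e : Finset (Fin t) => ∑ i ∈ e, x i) '' (H : Set (Finset (Fin t)))).Finite :=
    (H.finite_toSet).image _
  calc (0:ℝ) ≤ ∑ i ∈ e, x i := Finset.sum_nonneg fun i _ => hx i
    _ ≤ fFun H x := le_csSup hfin.bddAbove ⟨e, by simpa using he, rfl⟩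

lemma exists_edge_attains (hH : H.Nonempty) (x : Fin t → ℝ) :
    ∃ e ∈ H, fFun H x = ∑ i ∈ e, x i := by
  have hfin : ((fun e : Finset (Fin t) => ∑ i ∈ e, x i) '' (H : Set (Finset (Fin t)))).Finite :=
    (H.finite_toSet).image _
  obtain ⟨e0, he0⟩ := hH
  have hne : ((fun e : Finset (Fin t) => ∑ i ∈ e, x i) '' (H : Set (Finset (Fin t)))).Nonempty :=
    ⟨_, ⟨e0, by simpa using he0, rfl⟩⟩
  obtain ⟨e, he, heq⟩ := hne.csSup_mem hfin
  exact ⟨e, by simpa using he, heq.symm⟩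

lemma t_pos (hf : 0 < fMin H) : 0 < t := by
  by_contra h
  push_neg at h
  have ht : t = 0 := Nat.le_zero.mp h
  subst ht
  have hs : stdSimplex ℝ (Fin 0) = ∅ := by
    ext x
    simp [stdSimplex]
  rw [fMin, hs, Set.image_empty, Real.sInf_empty] at hf
  exact lt_irrefl _ hf

lemma H_nonempty (hf : 0 < fMin H) : H.Nonempty := by
  by_contra h
  rw [Finset.not_nonempty_iff_eq_empty] at h
  subst h
  have ht := t_pos (∅ : Finset (Finset (Fin t))) hf
  have hx : (fun _ : Fin t => (t : ℝ)⁻¹) ∈ stdSimplex ℝ (Fin t) := by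
    constructor
    · intro i; positivity
    · simp [Finset.sum_const, Finset.card_univ]
      field_simp
  have h0 : ∀ x : Fin t → ℝ, fFun (∅ : Finset (Finset (Fin t))) x = 0 := by
    intro x; simp [fFun, Real.sSup_empty]
  have hle : fMin (∅ : Finset (Finset (Fin t))) ≤ 0 := by
    have := csInf_le (s := fFun (∅ : Finset (Finset (Fin t))) '' stdSimplex ℝ (Fin t))
      ⟨0, by rintro z ⟨x, hxs, rfl⟩; rw [h0]⟩ ⟨_, hx, rfl⟩
    rwa [h0] at this
  linarith

lemma blowup_card_eq (r n : ℕ) (φ : Fin n → Fin t) :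
    ∀ e ∈ blowup H r n φ, e.card = r := by
  intro e he
  rw [blowup, Finset.mem_filter, Finset.mem_powersetCard] at he
  exact he.1.2

lemma blowup_local (hH : H.Nonempty) (hf : 0 < fMin H) {r : ℕ} (hr : 2 ≤ r) (n q : ℕ)
    (φ : Fin n → Fin t) :
    HasLocalProperty (blowup H r n φ) r q ⌈(q : ℝ) * fMin H⌉₊ := by
  intro A hA
  rcases Nat.eq_zero_or_pos q with rfl | hq
  · refine ⟨∅, Finset.empty_subset _, by simp, ?_⟩
    intro e he hce
    rw [Finset.subset_empty] at he
    subst he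
    simp at hce
    omega
  · have hq' : (0:ℝ) < q := by exact_mod_cast hq
    set y : Fin t → ℝ := fun i => ((A.filter (fun a => φ a = i)).card : ℝ) / q with hy
    have hcard : ∑ i : Fin t, ((A.filter fun a => φ a = i).card) = q := by
      rw [← hA]
      exact (Finset.card_eq_sum_card_fiberwise (fun a _ => Finset.mem_univ (φ a))).symm
    have hys : y ∈ stdSimplex ℝ (Fin t) := by
      constructor
      · intro i; exact div_nonneg (Nat.cast_nonneg _) hq'.le
      · simp only [hy, ← Finset.sum_div]
        rw [show ∑ i : Fin t, ((A.filter fun a => φ a = i).card : ℝ) = (q:ℝ) by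
          exact_mod_cast congrArg (Nat.cast : ℕ → ℝ) hcard]
        field_simp
    obtain ⟨e, heH, hee⟩ := exists_edge_attains H hH y
    have h1 : fMin H ≤ ∑ i ∈ e, y i := by
      rw [← hee]
      exact csInf_le ⟨0, by rintro z ⟨x, hxs, rfl⟩; exact fFun_nonneg H hH hxs.1⟩ ⟨y, hys, rfl⟩
    set B' := A.filter (fun a => φ a ∈ e) with hB'
    have hB'card : (B'.card : ℝ) = ∑ i ∈ e, ((A.filter fun a => φ a = i).card : ℝ) := by
      have h2 : B'.card = ∑ i ∈ e, ((B'.filter fun a => φ a = i).card) :=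
        Finset.card_eq_sum_card_fiberwise (fun a ha => (Finset.mem_filter.mp ha).2)
      rw [h2]
      push_cast
      refine Finset.sum_congr rfl fun i hi => ?_
      congr 2
      rw [hB', Finset.filter_filter]
      refine Finset.filter_congr fun a _ => ?_
      constructor
      · rintro ⟨_, h3⟩; exact h3
      · intro h3; exact ⟨h3 ▸ hi, h3⟩
    have hsum : ∑ i ∈ e, y i = (B'.card : ℝ) / q := by
      rw [hB'card, Finset.sum_div]
    have hp : ⌈(q:ℝ) * fMin H⌉₊ ≤ B'.card := by
      rw [Nat.ceil_le, mul_comm]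
      rw [hsum] at h1
      exact (le_div_iff₀ hq').mp h1
    obtain ⟨B, hBsub, hBcard⟩ := Finset.exists_subset_card_eq hp
    refine ⟨B, hBsub.trans (Finset.filter_subset _ _), hBcard, ?_⟩
    intro e' he' hce'
    rw [blowup, Finset.mem_filter, Finset.mem_powersetCard]
    exact ⟨⟨Finset.subset_univ _, hce'⟩, e, heH,
      fun w hw => (Finset.mem_filter.mp (hBsub (he' hw))).2⟩


end Aux

section Density
variable {t : ℕ} (H : Finset (Finset (Fin t)))

lemma rhoN_nonneg (r n : ℕ) : 0 ≤ rhoN H r n := by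
  apply Real.sInf_nonneg
  rintro y ⟨φ, rfl⟩
  positivity

lemma blowup_card_le (r n : ℕ) (φ : Fin n → Fin t) :
    (blowup H r n φ).card ≤ n.choose r := by
  calc (blowup H r n φ).card ≤ (Finset.powersetCard r (Finset.univ : Finset (Fin n))).card :=
        Finset.card_le_card (Finset.filter_subset _ _)
    _ = n.choose r := by rw [Finset.card_powersetCard, Finset.card_univ, Fintype.card_fin]

lemma density_le_one_s13 (r n : ℕ) (φ : Fin n → Fin t) :
    ((blowup H r n φ).card : ℝ) / (n.choose r) ≤ 1 := by
  rcases Nat.eq_zero_or_pos (n.choose r) with h | h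
  · simp [h]
  · rw [div_le_one (by exact_mod_cast h)]
    exact_mod_cast blowup_card_le H r n φ

lemma rhoN_le_one (ht : 0 < t) (r n : ℕ) : rhoN H r n ≤ 1 := by
  refine csInf_le_of_le ⟨0, ?_⟩ ⟨fun _ => ⟨0, ht⟩, rfl⟩ (density_le_one_s13 H r n _)
  rintro y ⟨φ, rfl⟩
  positivity

lemma rho_nonneg (ht : 0 < t) (r : ℕ) : 0 ≤ rho H r := by
  refine le_trans (rhoN_nonneg H r 0) ?_
  exact le_ciSup ⟨1, by rintro y ⟨n, rfl⟩; exact rhoN_le_one H ht r n⟩ 0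

lemma minEdges_le_s13 (hH : H.Nonempty) (hf : 0 < fMin H) {r : ℕ} (hr : 2 ≤ r) (n q : ℕ)
    (φ : Fin n → Fin t) :
    minEdges r n q ⌈(q : ℝ) * fMin H⌉₊ ≤ (blowup H r n φ).card :=
  Nat.sInf_le ⟨blowup H r n φ, blowup_card_eq H r n φ, blowup_local H hH hf hr n q φ, rfl⟩

lemma tDensity_le_rho (hf : 0 < fMin H) {r : ℕ} (hr : 2 ≤ r) (q : ℕ) :
    tDensity r q ⌈(q : ℝ) * fMin H⌉₊ ≤ rho H r := by
  have ht := t_pos H hf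
  have hH := H_nonempty H hf
  apply ciSup_le
  intro n
  rcases Nat.eq_zero_or_pos (n.choose r) with h | h
  · simp only [h, Nat.cast_zero, div_zero]
    exact rho_nonneg H ht r
  · have hc : (0:ℝ) < (n.choose r : ℝ) := by exact_mod_cast h
    have step : (minEdges r n q ⌈(q : ℝ) * fMin H⌉₊ : ℝ) / (n.choose r) ≤ rhoN H r n := by
      have hne : {y : ℝ | ∃ φ : Fin n → Fin t,
          y = ((blowup H r n φ).card : ℝ) / (n.choose r)}.Nonempty :=
        ⟨_, ⟨(fun _ => ⟨0, ht⟩ : Fin n → Fin t), rfl⟩⟩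
      apply le_csInf hne
      rintro y ⟨φ, rfl⟩
      gcongr
      exact_mod_cast minEdges_le_s13 H hH hf hr n q φ
    refine step.trans ?_
    exact le_ciSup ⟨1, by rintro y ⟨m, rfl⟩; exact rhoN_le_one H ht r m⟩ n

end Density

/-- If f(H) > 0 and γ = 1/f(H), then limsup_{q→∞} t_r(q,⌈q/γ⌉) ≤ ρ(H,r). -/
theorem limsup_local_turan_density_le_rho (t r : ℕ) (hr : 2 ≤ r)
    (H : Finset (Finset (Fin t))) (hf : 0 < fMin H) :
    limsup (fun q : ℕ => tDensity r q ⌈(q : ℝ) / (1 / fMin H)⌉₊) atTop ≤ rho H r := by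
  have hrw : ∀ q : ℕ, (q : ℝ) / (1 / fMin H) = (q : ℝ) * fMin H := by
    intro q; rw [one_div, div_eq_mul_inv, inv_inv]
  have hle : ∀ q : ℕ, tDensity r q ⌈(q : ℝ) / (1 / fMin H)⌉₊ ≤ rho H r := by
    intro q; rw [hrw q]; exact tDensity_le_rho H hf hr q
  have hnn : ∀ q : ℕ, 0 ≤ tDensity r q ⌈(q : ℝ) / (1 / fMin H)⌉₊ := by
    intro q
    apply Real.iSup_nonneg
    intro n
    positivity
  exact limsup_le_of_le (isCoboundedUnder_le_of_le atTop hnn) (Eventually.of_forall hle)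
end

section
/- Let k ≥ 2 and let the hypergraph H be the disjoint union of hypergraphs H₁,…,H_k (on pairwise disjoint vertex sets), where f(H_i) > 0 for each i. Then f(H) = ( Σ_{i=1}^{k} f(H_i)^{−1} )^{−1}. -/
open Filter

/-- The disjoint union of the hypergraphs `H i` on the pairwise disjoint vertex sets
`V i`, realized on the sigma type `(i : Fin k) × V i`. -/
def disjUnionHyp {k : ℕ} {V : Fin k → Type*} [∀ i, DecidableEq (V i)]
    (H : ∀ i, Finset (Finset (V i))) : Finset (Finset ((i : Fin k) × V i)) :=
  Finset.univ.biUnion fun i : Fin k => (H i).image fun e => e.image fun v => ⟨i, v⟩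

section Aux

variable {W : Type*}

lemma fFun_nonneg_s14 (H : Finset (Finset W)) {x : W → ℝ} (hx : ∀ v, 0 ≤ x v) :
    0 ≤ fFun H x :=
  Real.sSup_nonneg fun _ ⟨e, _, he⟩ => he ▸ Finset.sum_nonneg fun v _ => hx v

lemma edge_le_fFun (H : Finset (Finset W)) (x : W → ℝ) {e : Finset W} (he : e ∈ H) :
    ∑ v ∈ e, x v ≤ fFun H x :=
  le_csSup (((H : Set (Finset W)).toFinite.image _).bddAbove) ⟨e, he, rfl⟩

lemma fFun_le (H : Finset (Finset W)) (hH : H.Nonempty) (x : W → ℝ) {c : ℝ}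
    (h : ∀ e ∈ H, ∑ v ∈ e, x v ≤ c) : fFun H x ≤ c := by
  refine csSup_le ?_ (by rintro _ ⟨e, he, rfl⟩; exact h e he)
  obtain ⟨e, he⟩ := hH
  exact ⟨_, e, he, rfl⟩

lemma exists_edge_fFun (H : Finset (Finset W)) (hH : H.Nonempty) (x : W → ℝ) :
    ∃ e ∈ H, fFun H x = ∑ v ∈ e, x v := by
  obtain ⟨e, he, h⟩ := Finset.exists_mem_eq_sup' hH (fun e => ∑ v ∈ e, x v)
  exact ⟨e, he, by rw [fFun, ← Finset.sup'_eq_csSup_image, h]; exact hH⟩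

variable [Fintype W]

lemma fMin_le (H : Finset (Finset W)) {x : W → ℝ} (hx : x ∈ stdSimplex ℝ W) :
    fMin H ≤ fFun H x :=
  csInf_le ⟨0, by rintro _ ⟨y, hy, rfl⟩; exact fFun_nonneg_s14 H hy.1⟩ ⟨x, hx, rfl⟩

lemma nonempty_of_fMin_pos (H : Finset (Finset W)) (h : 0 < fMin H) :
    Nonempty W ∧ H.Nonempty ∧ (stdSimplex ℝ W).Nonempty := by
  have himg : (fFun H '' stdSimplex ℝ W).Nonempty := by
    by_contra hc
    rw [Set.not_nonempty_iff_eq_empty] at hc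
    rw [fMin, hc, Real.sInf_empty] at h
    exact lt_irrefl _ h
  obtain ⟨_, x, hx, rfl⟩ := himg
  have hW : Nonempty W := by
    by_contra hc
    rw [not_nonempty_iff] at hc
    have := hx.2
    rw [Finset.univ_eq_empty, Finset.sum_empty] at this
    norm_num at this
  refine ⟨hW, ?_, ⟨x, hx⟩⟩
  by_contra hc
  rw [Finset.not_nonempty_iff_eq_empty] at hc
  have : fFun H x = 0 := by
    rw [fFun, hc]
    simp [Real.sSup_empty]
  have h2 := fMin_le H hx
  rw [this] at h2
  linarith

end Aux

/-- If H is the disjoint union of H₁,…,H_k (k ≥ 2) with f(Hᵢ) > 0 for all i, then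
f(H) = (Σᵢ f(Hᵢ)⁻¹)⁻¹. -/
theorem fMin_disjUnion (k : ℕ) (hk : 2 ≤ k) (V : Fin k → Type*)
    [∀ i, Fintype (V i)] [∀ i, DecidableEq (V i)]
    (H : ∀ i, Finset (Finset (V i))) (hf : ∀ i, 0 < fMin (H i)) :
    fMin (disjUnionHyp H) = (∑ i, (fMin (H i))⁻¹)⁻¹ := by
  have hkpos : 0 < k := by omega
  haveI : NeZero k := ⟨by omega⟩
  set S : ℝ := ∑ i, (fMin (H i))⁻¹ with hS
  have hSpos : 0 < S := Finset.sum_pos (fun i _ => inv_pos.2 (hf i)) Finset.univ_nonempty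
  have hVne : ∀ i, Nonempty (V i) := fun i => (nonempty_of_fMin_pos _ (hf i)).1
  have hHne : ∀ i, (H i).Nonempty := fun i => (nonempty_of_fMin_pos _ (hf i)).2.1
  have hsimpne : ∀ i, (stdSimplex ℝ (V i)).Nonempty := fun i => (nonempty_of_fMin_pos _ (hf i)).2.2
  -- edges of the disjoint union
  have hmem : ∀ (i : Fin k) {e : Finset (V i)}, e ∈ H i →
      (e.image fun v => (⟨i, v⟩ : (j : Fin k) × V j)) ∈ disjUnionHyp H := by
    intro i e he
    rw [disjUnionHyp, Finset.mem_biUnion]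
    exact ⟨i, Finset.mem_univ i, Finset.mem_image_of_mem _ he⟩
  have hDUne : (disjUnionHyp H).Nonempty := by
    obtain ⟨e, he⟩ := hHne 0
    exact ⟨_, hmem 0 he⟩
  have hsumimg : ∀ (i : Fin k) (e : Finset (V i)) (x : ((j : Fin k) × V j) → ℝ),
      ∑ w ∈ e.image fun v => (⟨i, v⟩ : (j : Fin k) × V j), x w = ∑ v ∈ e, x ⟨i, v⟩ :=
    fun i e x => Finset.sum_image (fun a _ b _ h => sigma_mk_injective h)
  -- Lower bound: for all x in the simplex, S⁻¹ ≤ fFun (disjUnionHyp H) x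
  have lower : ∀ x ∈ stdSimplex ℝ ((i : Fin k) × V i), S⁻¹ ≤ fFun (disjUnionHyp H) x := by
    intro x hx
    set t : Fin k → ℝ := fun i => ∑ v, x ⟨i, v⟩ with ht
    have htsum : ∑ i, t i = 1 := by
      rw [← hx.2]
      exact (Finset.sum_sigma Finset.univ (fun _ => Finset.univ) x).symm
    have hex : ∃ i, (fMin (H i))⁻¹ / S ≤ t i := by
      by_contra hc
      push_neg at hc
      have : (1 : ℝ) < 1 := by
        calc (1 : ℝ) = ∑ i, t i := htsum.symm
        _ < ∑ i, (fMin (H i))⁻¹ / S :=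
            Finset.sum_lt_sum_of_nonempty Finset.univ_nonempty (fun i _ => hc i)
        _ = S / S := by rw [← Finset.sum_div]
        _ = 1 := div_self hSpos.ne'
      exact lt_irrefl _ this
    obtain ⟨i, hi⟩ := hex
    have hti : 0 < t i := lt_of_lt_of_le (div_pos (inv_pos.2 (hf i)) hSpos) hi
    set y : V i → ℝ := fun v => x ⟨i, v⟩ / t i with hy
    have hymem : y ∈ stdSimplex ℝ (V i) := by
      constructor
      · exact fun v => div_nonneg (hx.1 _) hti.le
      · show ∑ v, x ⟨i, v⟩ / t i = 1
        rw [← Finset.sum_div]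
        exact div_self hti.ne'
    have h1 : fMin (H i) ≤ fFun (H i) y := fMin_le _ hymem
    obtain ⟨e, he, hee⟩ := exists_edge_fFun (H i) (hHne i) y
    have h2 : fMin (H i) ≤ ∑ v ∈ e, y v := hee ▸ h1
    have h3 : t i * fMin (H i) ≤ ∑ v ∈ e, x ⟨i, v⟩ := by
      have : ∑ v ∈ e, x ⟨i, v⟩ = t i * ∑ v ∈ e, y v := by
        rw [Finset.mul_sum]
        refine Finset.sum_congr rfl fun v _ => ?_
        rw [hy]
        field_simp
      rw [this]
      exact mul_le_mul_of_nonneg_left h2 hti.le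
    have h4 : S⁻¹ ≤ t i * fMin (H i) := by
      have heq : (fMin (H i))⁻¹ / S * fMin (H i) = S⁻¹ := by
        rw [div_mul_eq_mul_div, inv_mul_cancel₀ (hf i).ne', one_div]
      have h5 := mul_le_mul_of_nonneg_right hi (hf i).le
      linarith
    calc S⁻¹ ≤ ∑ v ∈ e, x ⟨i, v⟩ := h4.trans h3
      _ = ∑ w ∈ e.image fun v => (⟨i, v⟩ : (j : Fin k) × V j), x w := (hsumimg i e x).symm
      _ ≤ fFun (disjUnionHyp H) x := edge_le_fFun _ _ (hmem i he)
  -- Upper bound: fMin (disjUnionHyp H) ≤ S⁻¹ + ε for every ε > 0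
  have upper : ∀ ε : ℝ, 0 < ε → fMin (disjUnionHyp H) ≤ S⁻¹ + ε := by
    intro ε hε
    have hx : ∀ i, ∃ z ∈ stdSimplex ℝ (V i), fFun (H i) z < fMin (H i) + ε := by
      intro i
      have : sInf (fFun (H i) '' stdSimplex ℝ (V i)) < fMin (H i) + ε := by
        rw [← fMin]; linarith
      obtain ⟨_, ⟨z, hz, rfl⟩, hlt⟩ :=
        exists_lt_of_csInf_lt ((hsimpne i).image _) this
      exact ⟨z, hz, hlt⟩
    choose z hz hfz using hx
    set X : ((i : Fin k) × V i) → ℝ := fun p => (fMin (H p.1))⁻¹ / S * z p.1 p.2 with hX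
    have hXmem : X ∈ stdSimplex ℝ ((i : Fin k) × V i) := by
      constructor
      · exact fun p => mul_nonneg (div_nonneg (inv_nonneg.2 (hf p.1).le) hSpos.le) ((hz p.1).1 _)
      · rw [show ∑ p, X p = ∑ i, ∑ v, X ⟨i, v⟩ from
          Finset.sum_sigma Finset.univ (fun _ => Finset.univ) X]
        have : ∀ i : Fin k, ∑ v, X ⟨i, v⟩ = (fMin (H i))⁻¹ / S := by
          intro i
          rw [hX]
          simp only
          show ∑ v, (fMin (H i))⁻¹ / S * z i v = _
          rw [← Finset.mul_sum, (hz i).2, mul_one]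
        rw [Finset.sum_congr rfl fun i _ => this i, ← Finset.sum_div, div_self hSpos.ne']
    have hXle : fFun (disjUnionHyp H) X ≤ S⁻¹ + ε := by
      refine fFun_le _ hDUne _ ?_
      intro e' he'
      rw [disjUnionHyp, Finset.mem_biUnion] at he'
      obtain ⟨i, -, he'⟩ := he'
      rw [Finset.mem_image] at he'
      obtain ⟨e, he, rfl⟩ := he'
      rw [hsumimg i e X]
      have hsum : ∑ v ∈ e, X ⟨i, v⟩ = (fMin (H i))⁻¹ / S * ∑ v ∈ e, z i v := by
        rw [Finset.mul_sum]
      have hedge : ∑ v ∈ e, z i v ≤ fMin (H i) + ε :=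
        (edge_le_fFun (H i) (z i) he).trans (hfz i).le
      have hfac : 0 ≤ (fMin (H i))⁻¹ / S := div_nonneg (inv_nonneg.2 (hf i).le) hSpos.le
      have hfac1 : (fMin (H i))⁻¹ / S ≤ 1 := by
        rw [div_le_one hSpos]
        exact Finset.single_le_sum (fun j _ => (inv_pos.2 (hf j)).le) (Finset.mem_univ i)
      calc ∑ v ∈ e, X ⟨i, v⟩ = (fMin (H i))⁻¹ / S * ∑ v ∈ e, z i v := hsum
        _ ≤ (fMin (H i))⁻¹ / S * (fMin (H i) + ε) :=
            mul_le_mul_of_nonneg_left hedge hfac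
        _ = (fMin (H i))⁻¹ / S * fMin (H i) + (fMin (H i))⁻¹ / S * ε := by ring
        _ ≤ S⁻¹ + ε := by
            refine add_le_add ?_ ?_
            · rw [div_mul_eq_mul_div, inv_mul_cancel₀ (hf i).ne', one_div]
            · nlinarith
    exact (fMin_le _ hXmem).trans hXle
  refine le_antisymm ?_ ?_
  · exact le_of_forall_pos_le_add upper
  · refine le_csInf ?_ ?_
    · haveI : Nonempty ((i : Fin k) × V i) := ⟨⟨0, Classical.arbitrary (V 0)⟩⟩
      exact Set.Nonempty.image _ ⟨_, single_mem_stdSimplex ℝ (Classical.arbitrary _)⟩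
    · rintro _ ⟨x, hx, rfl⟩
      exact lower x hx
end

section
/- Let r ≥ 2 and k ≥ 2 be integers, and let the hypergraph H be the disjoint union of hypergraphs H₁,…,H_k (on pairwise disjoint vertex sets), where g(H_i, r) > 0 for each i. Then g(H,r) = ( Σ_{i=1}^{k} g(H_i, r)^{−1/(r−1)} )^{−(r−1)}. -/
open Filter

section helpers
variable {W : Type*} [Fintype W]

lemma gFun_nonneg (H : Finset (Finset W)) (r : ℕ) {x : W → ℝ} (hx : ∀ v, 0 ≤ x v) :
    0 ≤ gFun H r x := by
  unfold gFun
  refine Finset.sum_nonneg fun y _ => mul_nonneg (Finset.prod_nonneg fun j _ => hx _) ?_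
  split <;> norm_num

lemma gFun_smul (H : Finset (Finset W)) (r : ℕ) (c : ℝ) (x : W → ℝ) :
    gFun H r (fun v => c * x v) = c ^ r * gFun H r x := by
  unfold gFun
  rw [Finset.mul_sum]
  refine Finset.sum_congr rfl fun y _ => ?_
  rw [Finset.prod_mul_distrib, Finset.prod_const, Finset.card_univ, Fintype.card_fin]
  ring

lemma bddBelow_g (H : Finset (Finset W)) (r : ℕ) :
    BddBelow (gFun H r '' stdSimplex ℝ W) := by
  refine ⟨0, ?_⟩
  rintro a ⟨x, hx, rfl⟩
  exact gFun_nonneg H r hx.1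

lemma gMin_le (H : Finset (Finset W)) (r : ℕ) {x : W → ℝ} (hx : x ∈ stdSimplex ℝ W) :
    gMin H r ≤ gFun H r x := csInf_le (bddBelow_g H r) ⟨x, hx, rfl⟩

lemma gFun_continuous (H : Finset (Finset W)) (r : ℕ) : Continuous (gFun H r) := by
  unfold gFun
  refine continuous_finset_sum _ fun y _ => Continuous.mul ?_ continuous_const
  exact continuous_finset_prod _ fun j _ => continuous_apply _

lemma nonempty_of_gMin_pos (H : Finset (Finset W)) (r : ℕ) (h : 0 < gMin H r) :
    Nonempty W := by
  by_contra hne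
  have : IsEmpty W := not_nonempty_iff.mp hne
  rw [gMin, stdSimplex_of_isEmpty_index, Set.image_empty, Real.sInf_empty] at h
  exact lt_irrefl 0 h

lemma exists_gMin [Nonempty W] (H : Finset (Finset W)) (r : ℕ) :
    ∃ x ∈ stdSimplex ℝ W, gFun H r x = gMin H r := by
  classical
  have hne : (stdSimplex ℝ W).Nonempty := ⟨Pi.single (Classical.arbitrary W) 1, single_mem_stdSimplex ℝ (Classical.arbitrary W)⟩
  obtain ⟨x, hx, hmin⟩ := (isCompact_stdSimplex ℝ W).exists_isMinOn
    hne (gFun_continuous H r).continuousOn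
  refine ⟨x, hx, ?_⟩
  have hls : IsLeast (gFun H r '' stdSimplex ℝ W) (gFun H r x) := by
    constructor
    · exact ⟨x, hx, rfl⟩
    · rintro a ⟨z, hz, rfl⟩
      exact hmin hz
  unfold gMin
  exact hls.csInf_eq.symm

end helpers

lemma iteCongr {p q : Prop} {h1 : Decidable p} {h2 : Decidable q} (h : p ↔ q) :
    (@ite ℝ p h1 1 0) = @ite ℝ q h2 1 0 := by
  cases h1 <;> cases h2 <;> simp_all

open Classical in
lemma gFun_disjUnion {k : ℕ} {V : Fin k → Type*} [∀ i, Fintype (V i)]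
    [∀ i, DecidableEq (V i)] (H : ∀ i, Finset (Finset (V i))) (r : ℕ) (hr : 0 < r)
    (x : ((i : Fin k) × V i) → ℝ) :
    gFun (disjUnionHyp H) r x = ∑ i, gFun (H i) r (fun v => x ⟨i, v⟩) := by
  set C : Fin k → (Fin r → (i : Fin k) × V i) → Prop :=
    fun i y => ∃ e ∈ H i, ∀ j, y j ∈ e.image fun v => (⟨i, v⟩ : (i : Fin k) × V i) with hC
  have hCfst : ∀ i (y : Fin r → (i : Fin k) × V i), C i y → ∀ j, (y j).1 = i := by
    rintro i y ⟨e, he, hm⟩ j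
    obtain ⟨v, hv, hvy⟩ := Finset.mem_image.mp (hm j)
    rw [← hvy]
  have hcond : ∀ y : Fin r → (i : Fin k) × V i,
      (∃ e ∈ disjUnionHyp H, ∀ j, y j ∈ e) ↔ ∃ i, C i y := by
    intro y
    constructor
    · rintro ⟨e, he, hm⟩
      simp only [disjUnionHyp, Finset.mem_biUnion, Finset.mem_univ, true_and,
        Finset.mem_image] at he
      obtain ⟨i, e', he', rfl⟩ := he
      exact ⟨i, e', he', hm⟩
    · rintro ⟨i, e, he, hm⟩
      refine ⟨e.image fun v => (⟨i, v⟩ : (i : Fin k) × V i), ?_, hm⟩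
      simp only [disjUnionHyp, Finset.mem_biUnion, Finset.mem_univ, true_and,
        Finset.mem_image]
      exact ⟨i, e, he, rfl⟩
  have hrepr : ∀ (i : Fin k) (y : Fin r → (i : Fin k) × V i), (∀ j, (y j).1 = i) →
      ∃ z : Fin r → V i, y = fun j => ⟨i, z j⟩ := by
    intro i y hfst
    refine ⟨fun j => cast (congrArg V (hfst j)) (y j).2, funext fun j => ?_⟩
    apply Sigma.ext
    · exact hfst j
    · exact (cast_heq _ _).symm
  have key : ∀ i : Fin k,
      (∑ y : Fin r → (i : Fin k) × V i, (∏ j, x (y j)) * (if C i y then (1 : ℝ) else 0))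
        = gFun (H i) r (fun v => x ⟨i, v⟩) := by
    intro i
    conv_rhs => rw [gFun]
    have hinj : Function.Injective
        (fun (z : Fin r → V i) (j : Fin r) => (⟨i, z j⟩ : (i : Fin k) × V i)) := by
      intro z₁ z₂ h
      funext j
      have := congrFun h j
      simpa using this
    have hvanish : ∀ y ∈ (Finset.univ : Finset (Fin r → (i : Fin k) × V i)),
        y ∉ Finset.univ.image
          (fun (z : Fin r → V i) (j : Fin r) => (⟨i, z j⟩ : (i : Fin k) × V i)) →
        (∏ j, x (y j)) * (if C i y then (1 : ℝ) else 0) = 0 := by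
      intro y _ hy
      rw [if_neg, mul_zero]
      intro hCiy
      obtain ⟨z, rfl⟩ := hrepr i y (hCfst i y hCiy)
      exact hy (Finset.mem_image.mpr ⟨z, Finset.mem_univ z, rfl⟩)
    rw [← Finset.sum_subset (Finset.subset_univ _) hvanish,
      Finset.sum_image (fun z₁ _ z₂ _ h => hinj h)]
    refine Finset.sum_congr rfl fun z _ => ?_
    have hiff : C i (fun j => ⟨i, z j⟩) ↔ ∃ e ∈ H i, ∀ j, z j ∈ e := by
      simp only [hC]
      simp
    congr 1
    exact iteCongr hiff
  have hsum : ∀ y : Fin r → (i : Fin k) × V i,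
      (∑ i, if C i y then (1 : ℝ) else 0) = if ∃ i, C i y then (1 : ℝ) else 0 := by
    intro y
    by_cases h : ∃ i, C i y
    · obtain ⟨i₀, hi₀⟩ := h
      have huniq : ∀ i, C i y ↔ i = i₀ := by
        intro i
        constructor
        · intro hi
          have h1 := hCfst i y hi ⟨0, hr⟩
          have h2 := hCfst i₀ y hi₀ ⟨0, hr⟩
          rw [← h1, h2]
        · rintro rfl; exact hi₀
      rw [if_pos ⟨i₀, hi₀⟩]
      simp [huniq]
    · rw [if_neg h]
      exact Finset.sum_eq_zero fun i _ => if_neg fun hi => h ⟨i, hi⟩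
  conv_lhs => rw [gFun]
  refine Eq.trans (Finset.sum_congr rfl fun y _ => ?_)
    (Finset.sum_comm.trans (Finset.sum_congr rfl fun i _ => key i))
  rw [← Finset.mul_sum]
  congr 1
  rw [hsum y]
  exact iteCongr (hcond y)

lemma holder_bound {k : ℕ} (hk : 0 < k) (r : ℕ) (hr : 2 ≤ r) (g t : Fin k → ℝ)
    (hg : ∀ i, 0 < g i) (ht : ∀ i, 0 ≤ t i) (hts : ∑ i, t i = 1) :
    (∑ i, g i ^ (-(1 : ℝ) / ((r : ℝ) - 1))) ^ (-((r : ℝ) - 1)) ≤ ∑ i, g i * t i ^ r := by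
  have hr1 : (1 : ℝ) < (r : ℝ) := by
    have : (2 : ℝ) ≤ (r : ℝ) := by exact_mod_cast hr
    linarith
  have hrsub : (0 : ℝ) < (r : ℝ) - 1 := by linarith
  set p : ℝ := (r : ℝ) with hp
  set q : ℝ := (r : ℝ) / ((r : ℝ) - 1) with hq
  have hpq : p.HolderConjugate q := by
    rw [Real.holderConjugate_iff]
    refine ⟨hr1, ?_⟩
    rw [hp, hq]
    rw [inv_div]
    field_simp
    ring
  set ρ : ℝ := -(1 : ℝ) / ((r : ℝ) - 1) with hρ
  set S : ℝ := ∑ i, g i ^ ρ with hS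
  set A : ℝ := ∑ i, g i * t i ^ r with hA
  have hSpos : 0 < S :=
    Finset.sum_pos (fun i _ => Real.rpow_pos_of_pos (hg i) ρ) ⟨⟨0, hk⟩, Finset.mem_univ _⟩
  have hA0 : 0 ≤ A := Finset.sum_nonneg fun i _ =>
    mul_nonneg (hg i).le (pow_nonneg (ht i) r)
  -- Hölder
  have hHolder := Real.inner_le_Lp_mul_Lq_of_nonneg Finset.univ hpq
    (f := fun i => g i ^ (1 / p) * t i) (g := fun i => g i ^ (-(1 / p)))
    (fun i _ => mul_nonneg (Real.rpow_nonneg (hg i).le _) (ht i))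
    (fun i _ => Real.rpow_nonneg (hg i).le _)
  have e1 : ∑ i, (g i ^ (1 / p) * t i) * g i ^ (-(1 / p)) = 1 := by
    have he : ∀ i : Fin k, (g i ^ (1 / p) * t i) * g i ^ (-(1 / p)) = t i := by
      intro i
      rw [mul_comm (g i ^ (1 / p)) (t i), mul_assoc, ← Real.rpow_add (hg i)]
      simp
    rw [Finset.sum_congr rfl fun i _ => he i, hts]
  have e2 : ∑ i, (g i ^ (1 / p) * t i) ^ p = A := by
    refine Finset.sum_congr rfl fun i _ => ?_
    rw [Real.mul_rpow (Real.rpow_nonneg (hg i).le _) (ht i),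
      ← Real.rpow_natCast (t i) r, ← Real.rpow_mul (hg i).le]
    rw [one_div_mul_cancel hpq.ne_zero, Real.rpow_one]
  have e3 : ∑ i, (g i ^ (-(1 / p))) ^ q = S := by
    refine Finset.sum_congr rfl fun i _ => ?_
    rw [← Real.rpow_mul (hg i).le]
    congr 1
    rw [hρ, hq, hp]
    field_simp
  rw [e1, e2, e3] at hHolder
  -- now 1 ≤ A^(1/p) * S^(1/q)
  have hkey : 1 ≤ A * S ^ ((r : ℝ) - 1) := by
    have h2 : (1 : ℝ) ≤ (A ^ (1 / p) * S ^ (1 / q)) ^ p := by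
      have := Real.rpow_le_rpow zero_le_one hHolder hpq.nonneg
      rwa [Real.one_rpow] at this
    calc (1 : ℝ) ≤ (A ^ (1 / p) * S ^ (1 / q)) ^ p := h2
      _ = A * S ^ ((r : ℝ) - 1) := by
          rw [Real.mul_rpow (Real.rpow_nonneg hA0 _) (Real.rpow_nonneg hSpos.le _),
            ← Real.rpow_mul hA0, ← Real.rpow_mul hSpos.le,
            one_div_mul_cancel hpq.ne_zero, Real.rpow_one]
          congr 1
          rw [hq, hp]
          field_simp
  have : S ^ (-((r : ℝ) - 1)) = (S ^ ((r : ℝ) - 1))⁻¹ := by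
    rw [← Real.rpow_neg_one, ← Real.rpow_mul hSpos.le]
    ring_nf
  rw [this, inv_le_iff_one_le_mul₀ (Real.rpow_pos_of_pos hSpos _)]
  exact hkey



/-- If H is the disjoint union of H₁,…,H_k (k ≥ 2) with g(Hᵢ,r) > 0 for all i and
r ≥ 2, then g(H,r) = (Σᵢ g(Hᵢ,r)^{−1/(r−1)})^{−(r−1)}. -/
theorem gMin_disjUnion (r k : ℕ) (hr : 2 ≤ r) (hk : 2 ≤ k) (V : Fin k → Type*)
    [∀ i, Fintype (V i)] [∀ i, DecidableEq (V i)]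
    (H : ∀ i, Finset (Finset (V i))) (hg : ∀ i, 0 < gMin (H i) r) :
    gMin (disjUnionHyp H) r =
      (∑ i, gMin (H i) r ^ (-(1 : ℝ) / ((r : ℝ) - 1))) ^ (-((r : ℝ) - 1)) := by
  have hr0 : 0 < r := by omega
  have hrR : (0 : ℝ) < (r : ℝ) - 1 := by
    have : (2 : ℝ) ≤ (r : ℝ) := by exact_mod_cast hr
    linarith
  have hne : ∀ i, Nonempty (V i) := fun i => nonempty_of_gMin_pos _ _ (hg i)
  have hkpos : 0 < k := by omega
  set ρ : ℝ := -(1 : ℝ) / ((r : ℝ) - 1) with hρ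
  set S : ℝ := ∑ i, gMin (H i) r ^ ρ with hS
  have hSpos : 0 < S :=
    Finset.sum_pos (fun i _ => Real.rpow_pos_of_pos (hg i) ρ) ⟨⟨0, hkpos⟩, Finset.mem_univ _⟩
  -- sum over sigma type decomposes
  have hsig : ∀ f : ((i : Fin k) × V i) → ℝ,
      ∑ p : (i : Fin k) × V i, f p = ∑ i, ∑ v : V i, f ⟨i, v⟩ := by
    intro f
    rw [← Finset.univ_sigma_univ, Finset.sum_sigma]
  apply le_antisymm
  · -- upper bound: construct an explicit weight vector
    have hopt : ∀ i, ∃ x ∈ stdSimplex ℝ (V i), gFun (H i) r x = gMin (H i) r := fun i => by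
      haveI := hne i
      exact exists_gMin (H i) r
    choose xopt hxmem hxval using hopt
    set t : Fin k → ℝ := fun i => gMin (H i) r ^ ρ / S with hT
    have ht0 : ∀ i, 0 ≤ t i := fun i =>
      div_nonneg (Real.rpow_nonneg (hg i).le ρ) hSpos.le
    have hts : ∑ i, t i = 1 := by
      rw [hT, ← Finset.sum_div, ← hS, div_self hSpos.ne']
    set x : ((i : Fin k) × V i) → ℝ := fun p => t p.1 * xopt p.1 p.2 with hx
    have hxmem' : x ∈ stdSimplex ℝ ((i : Fin k) × V i) := by
      constructor
      · intro p
        exact mul_nonneg (ht0 p.1) ((hxmem p.1).1 p.2)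
      · rw [hsig x]
        have : ∀ i : Fin k, ∑ v : V i, x ⟨i, v⟩ = t i := by
          intro i
          rw [hx]
          simp only
          rw [← Finset.mul_sum, (hxmem i).2, mul_one]
        rw [Finset.sum_congr rfl fun i _ => this i, hts]
    have hval : gFun (disjUnionHyp H) r x = S ^ (1 - (r : ℝ)) := by
      rw [gFun_disjUnion H r hr0 x]
      have hterm : ∀ i : Fin k,
          gFun (H i) r (fun v => x ⟨i, v⟩) = gMin (H i) r ^ ρ / S ^ (r : ℕ) := by
        intro i
        have : (fun v => x ⟨i, v⟩) = fun v => t i * xopt i v := rfl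
        rw [this, gFun_smul, hxval i]
        have hpow : t i ^ (r : ℕ) = gMin (H i) r ^ (ρ * r) / S ^ (r : ℕ) := by
          rw [hT, div_pow]
          congr 1
          rw [← Real.rpow_natCast (gMin (H i) r ^ ρ) r, ← Real.rpow_mul (hg i).le]
        rw [hpow, div_mul_eq_mul_div]
        congr 1
        rw [← Real.rpow_add_one (hg i).ne' (ρ * r)]
        congr 1
        rw [hρ]
        field_simp
        ring
      rw [Finset.sum_congr rfl fun i _ => hterm i, ← Finset.sum_div, ← hS,
        ← Real.rpow_natCast S r]
      rw [Real.rpow_sub hSpos, Real.rpow_one]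
    calc gMin (disjUnionHyp H) r ≤ gFun (disjUnionHyp H) r x := gMin_le _ _ hxmem'
      _ = S ^ (1 - (r : ℝ)) := hval
      _ = S ^ (-((r : ℝ) - 1)) := by ring_nf
  · -- lower bound
    have hneS : Nonempty ((i : Fin k) × V i) := by
      haveI := hne ⟨0, hkpos⟩
      exact ⟨⟨⟨0, hkpos⟩, Classical.arbitrary _⟩⟩
    refine le_csInf ?_ ?_
    · haveI := hneS
      classical
      exact ⟨_, ⟨Pi.single (Classical.arbitrary _) 1,
        single_mem_stdSimplex ℝ (Classical.arbitrary _), rfl⟩⟩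
    · rintro b ⟨x, hxmem, rfl⟩
      rw [gFun_disjUnion H r hr0 x]
      set t : Fin k → ℝ := fun i => ∑ v : V i, x ⟨i, v⟩ with hT
      have ht0 : ∀ i, 0 ≤ t i := fun i => Finset.sum_nonneg fun v _ => hxmem.1 _
      have hts : ∑ i, t i = 1 := by
        rw [hT, ← hsig x]
        exact hxmem.2
      have hterm : ∀ i : Fin k,
          gMin (H i) r * t i ^ r ≤ gFun (H i) r (fun v => x ⟨i, v⟩) := by
        intro i
        rcases eq_or_lt_of_le (ht0 i) with h0 | hpos
        · rw [← h0, zero_pow hr0.ne', mul_zero]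
          exact gFun_nonneg _ _ fun v => hxmem.1 _
        · set z : V i → ℝ := fun v => x ⟨i, v⟩ / t i with hz
          have hzmem : z ∈ stdSimplex ℝ (V i) := by
            constructor
            · intro v
              exact div_nonneg (hxmem.1 _) hpos.le
            · rw [hz]
              simp only
              rw [← Finset.sum_div]
              exact div_self hpos.ne'
          have h1 : gFun (H i) r (fun v => x ⟨i, v⟩) = t i ^ r * gFun (H i) r z := by
            have he : (fun v => x ⟨i, v⟩) = fun v => t i * z v := by
              funext v
              rw [hz]
              field_simp
            rw [he, gFun_smul]
          rw [h1, mul_comm (gMin (H i) r) (t i ^ r)]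
          exact mul_le_mul_of_nonneg_left (gMin_le (H i) r hzmem) (pow_nonneg (ht0 i) r)
      calc S ^ (-((r : ℝ) - 1))
          ≤ ∑ i, gMin (H i) r * t i ^ r :=
            holder_bound hkpos r hr (fun i => gMin (H i) r) t hg ht0 hts
        _ ≤ ∑ i, gFun (H i) r (fun v => x ⟨i, v⟩) :=
            Finset.sum_le_sum fun i _ => hterm i
end

section
/- For all integers r ≥ 3 and m ≥ 1, the (m+1)-uniform tight cycle of length 2m+1 satisfies g(C^{m+1}_{2m+1}, r) ≤ ((m+1)^r − m^r) / (2m+1)^{r−1}. -/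
open Filter

/-- The m-uniform tight cycle of length t: the hypergraph on `Fin t` with the t edges
`e_i = {i, i+1, …, i+m−1}` (indices modulo t). -/
def tightCycle (t m : ℕ) : Finset (Finset (Fin t)) :=
  Finset.univ.image fun i : Fin t =>
    Finset.univ.filter fun v : Fin t => ∃ j < m, (v : ℕ) = ((i : ℕ) + j) % t

def edgeC (t m : ℕ) (i : Fin t) : Finset (Fin t) :=
  Finset.univ.filter fun v : Fin t => ∃ j < m, (v : ℕ) = ((i : ℕ) + j) % t

lemma mem_edgeC {t m : ℕ} {i v : Fin t} :
    v ∈ edgeC t m i ↔ ∃ j < m, (v : ℕ) = ((i : ℕ) + j) % t := by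
  simp [edgeC]

lemma tightCycle_eq (t m : ℕ) : tightCycle t m = Finset.univ.image (edgeC t m) := rfl

lemma edgeC_eq_image (t m : ℕ) (ht : 0 < t) (i : Fin t) :
    edgeC t m i = Finset.image
      (fun j : Fin m => (⟨((i : ℕ) + j) % t, Nat.mod_lt _ ht⟩ : Fin t)) Finset.univ := by
  ext v
  simp only [mem_edgeC, Finset.mem_image, Finset.mem_univ, true_and]
  constructor
  · rintro ⟨j, hj, hv⟩; exact ⟨⟨j, hj⟩, by ext; simp [hv]⟩
  · rintro ⟨j, rfl⟩; exact ⟨j, j.isLt, rfl⟩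

lemma card_edgeC (t m : ℕ) (ht : 0 < t) (hmt : m ≤ t) (i : Fin t) :
    (edgeC t m i).card = m := by
  rw [edgeC_eq_image t m ht i, Finset.card_image_of_injective _ ?_, Finset.card_univ,
    Fintype.card_fin]
  intro j1 j2 h
  have h' : ((i : ℕ) + j1) % t = ((i : ℕ) + j2) % t := congrArg Fin.val h
  have : (j1 : ℕ) % t = (j2 : ℕ) % t := Nat.ModEq.add_left_cancel' _ h'
  have e1 : (j1 : ℕ) = (j2 : ℕ) := by
    rwa [Nat.mod_eq_of_lt (lt_of_lt_of_le j1.isLt hmt),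
      Nat.mod_eq_of_lt (lt_of_lt_of_le j2.isLt hmt)] at this
  exact Fin.ext e1

lemma self_mem_edgeC {t m : ℕ} (hm : 0 < m) (i : Fin t) : i ∈ edgeC t m i :=
  mem_edgeC.2 ⟨0, hm, by simp [Nat.mod_eq_of_lt i.isLt]⟩

lemma exists_good {t m r : ℕ} (ht : 0 < t) (hr : 0 < r) {y : Fin r → Fin t} {a : Fin t}
    (hy : ∀ k, y k ∈ edgeC t m a) :
    ∃ i : Fin t, (∃ k, y k = i) ∧ ∀ k, y k ∈ edgeC t m i := by
  have h : ∀ k, ∃ j, j < m ∧ ((y k : ℕ) = ((a : ℕ) + j) % t) := by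
    intro k
    obtain ⟨j, hj, hv⟩ := mem_edgeC.1 (hy k)
    exact ⟨j, hj, hv⟩
  classical
  set J : Fin r → ℕ := fun k => Nat.find (h k) with hJ
  have hJspec : ∀ k, J k < m ∧ (y k : ℕ) = ((a : ℕ) + J k) % t := fun k => Nat.find_spec (h k)
  obtain ⟨k0, -, hk0⟩ := Finset.exists_min_image Finset.univ J
    ⟨⟨0, hr⟩, Finset.mem_univ _⟩
  refine ⟨y k0, ⟨k0, rfl⟩, fun k => mem_edgeC.2 ⟨J k - J k0, ?_, ?_⟩⟩
  · exact lt_of_le_of_lt (Nat.sub_le _ _) (hJspec k).1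
  · have hle : J k0 ≤ J k := hk0 k (Finset.mem_univ k)
    have harith : (a : ℕ) + J k0 + (J k - J k0) = (a : ℕ) + J k := by omega
    rw [(hJspec k0).2, Nat.mod_add_mod, harith, (hJspec k).2]


open Finset Fintype in
lemma card_B (t m r : ℕ) (ht : 0 < t) (hm : 0 < m) (hmt : m ≤ t) (i : Fin t) :
    ((Fintype.piFinset fun _ : Fin r => edgeC t m i) \
      (Fintype.piFinset fun _ : Fin r => (edgeC t m i).erase i)).card
      = m ^ r - (m - 1) ^ r := by
  rw [Finset.card_sdiff_of_subset (Fintype.piFinset_subset _ _ fun _ => Finset.erase_subset _ _)]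
  rw [Fintype.card_piFinset, Fintype.card_piFinset]
  simp [Finset.card_erase_of_mem (self_mem_edgeC hm i), card_edgeC t m ht hmt i]

lemma card_covered_le (t m r : ℕ) (ht : 0 < t) (hm : 0 < m) (hmt : m ≤ t) (hr : 0 < r) :
    (Finset.univ.filter fun y : Fin r → Fin t => ∃ e ∈ tightCycle t m, ∀ k, y k ∈ e).card
      ≤ t * (m ^ r - (m - 1) ^ r) := by
  have hsub : (Finset.univ.filter fun y : Fin r → Fin t => ∃ e ∈ tightCycle t m, ∀ k, y k ∈ e)
      ⊆ Finset.univ.biUnion fun i : Fin t =>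
        (Fintype.piFinset fun _ : Fin r => edgeC t m i) \
          (Fintype.piFinset fun _ : Fin r => (edgeC t m i).erase i) := by
    intro y hy
    obtain ⟨-, e, he, hye⟩ := Finset.mem_filter.1 hy
    rw [tightCycle_eq] at he
    obtain ⟨a, -, rfl⟩ := Finset.mem_image.1 he
    obtain ⟨i, ⟨k, hk⟩, hyi⟩ := exists_good ht hr hye
    refine Finset.mem_biUnion.2 ⟨i, Finset.mem_univ _, Finset.mem_sdiff.2
      ⟨Fintype.mem_piFinset.2 hyi, fun hmem => ?_⟩⟩
    have := Fintype.mem_piFinset.1 hmem k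
    rw [hk] at this
    exact Finset.notMem_erase i _ this
  calc _ ≤ _ := Finset.card_le_card hsub
    _ ≤ ∑ i : Fin t, ((Fintype.piFinset fun _ : Fin r => edgeC t m i) \
          (Fintype.piFinset fun _ : Fin r => (edgeC t m i).erase i)).card :=
        Finset.card_biUnion_le
    _ = t * (m ^ r - (m - 1) ^ r) := by
        simp [card_B t m r ht hm hmt, Finset.sum_const, Finset.card_univ, mul_comm]

lemma gFun_tc_const (t m r : ℕ) (c : ℝ) :
    gFun (tightCycle t m) r (fun _ => c) =
      c ^ r * ((Finset.univ.filter fun y : Fin r → Fin t =>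
        ∃ e ∈ tightCycle t m, ∀ k, y k ∈ e).card : ℝ) := by
  rw [gFun]
  simp only [Finset.prod_const, Finset.card_univ, Fintype.card_fin, ← Finset.mul_sum]
  congr 1
  convert Finset.sum_boole (p := fun y : Fin r → Fin t => ∃ e ∈ tightCycle t m, ∀ k, y k ∈ e)
    Finset.univ using 2
  rename_i y _
  by_cases h : ∃ e ∈ tightCycle t m, ∀ k, y k ∈ e
  · rw [if_pos h, if_pos h]
  · rw [if_neg h, if_neg h]

/-- For r ≥ 3 and m ≥ 1, g(C^{m+1}_{2m+1}, r) ≤ ((m+1)^r − m^r)/(2m+1)^{r−1}. -/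
theorem gMin_tightCycle_le (r m : ℕ) (hr : 3 ≤ r) (hm : 1 ≤ m) :
    gMin (tightCycle (2 * m + 1) (m + 1)) r ≤
      (((m : ℝ) + 1) ^ r - (m : ℝ) ^ r) / (2 * (m : ℝ) + 1) ^ (r - 1) := by
  have ht0 : 0 < 2 * m + 1 := by omega
  have htR : (0 : ℝ) < ((2 * m + 1 : ℕ) : ℝ) := by exact_mod_cast ht0
  have hx : (fun _ : Fin (2 * m + 1) => (((2 * m + 1 : ℕ) : ℝ))⁻¹) ∈
      stdSimplex ℝ (Fin (2 * m + 1)) := by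
    refine ⟨fun i => by positivity, ?_⟩
    rw [Finset.sum_const, Finset.card_univ, Fintype.card_fin, nsmul_eq_mul,
      mul_inv_cancel₀ htR.ne']
  have hle : gMin (tightCycle (2 * m + 1) (m + 1)) r ≤
      gFun (tightCycle (2 * m + 1) (m + 1)) r (fun _ => (((2 * m + 1 : ℕ) : ℝ))⁻¹) := by
    apply csInf_le
    · refine ⟨0, fun b hb => ?_⟩
      obtain ⟨z, hz, rfl⟩ := hb
      apply Finset.sum_nonneg
      intro y _
      refine mul_nonneg (Finset.prod_nonneg fun i _ => hz.1 _) ?_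
      split <;> norm_num
    · exact Set.mem_image_of_mem _ hx
  have hval := gFun_tc_const (2 * m + 1) (m + 1) r (((2 * m + 1 : ℕ) : ℝ))⁻¹
  have hN := card_covered_le (2 * m + 1) (m + 1) r ht0 (by omega) (by omega) (by omega)
  have hc : (0 : ℝ) ≤ ((((2 * m + 1 : ℕ) : ℝ))⁻¹) ^ r := by positivity
  have harith : ((((2 * m + 1 : ℕ) : ℝ))⁻¹) ^ r *
      (((2 * m + 1) * ((m + 1) ^ r - (m + 1 - 1) ^ r) : ℕ) : ℝ) ≤
      (((m : ℝ) + 1) ^ r - (m : ℝ) ^ r) / (2 * (m : ℝ) + 1) ^ (r - 1) := by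
    have hsub : (m + 1 - 1) ^ r ≤ (m + 1) ^ r := Nat.pow_le_pow_left (Nat.sub_le _ _) r
    have hcast : (((2 * m + 1) * ((m + 1) ^ r - (m + 1 - 1) ^ r) : ℕ) : ℝ) =
        (2 * (m : ℝ) + 1) * (((m : ℝ) + 1) ^ r - (m : ℝ) ^ r) := by
      rw [Nat.cast_mul, Nat.cast_sub hsub]
      push_cast
      ring
    have h2m : ((2 * m + 1 : ℕ) : ℝ) = 2 * (m : ℝ) + 1 := by push_cast; ring
    have htpow : (2 * (m : ℝ) + 1) ^ r = (2 * (m : ℝ) + 1) ^ (r - 1) *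
        (2 * (m : ℝ) + 1) := by
      have hr1 : 1 ≤ r := le_trans (by norm_num) hr
      rw [← pow_succ, Nat.sub_add_cancel hr1]
    rw [hcast, inv_pow, h2m, htpow]
    refine le_of_eq ?_
    have hT : (2 * (m : ℝ) + 1) ≠ 0 := by positivity
    field_simp
  calc gMin (tightCycle (2 * m + 1) (m + 1)) r ≤ _ := hle
    _ = _ := hval
    _ ≤ ((((2 * m + 1 : ℕ) : ℝ))⁻¹) ^ r *
        (((2 * m + 1) * ((m + 1) ^ r - (m + 1 - 1) ^ r) : ℕ) : ℝ) := by
        refine mul_le_mul_of_nonneg_left ?_ hc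
        exact_mod_cast hN
    _ ≤ _ := harith
end

section
/- For all integers r ≥ 3 and m with 3 ≤ m ≤ r, the (m−1)-uniform tight cycle of length m satisfies g(C^{m−1}_m, r) ≤ Σ_{k=1}^{m−1} (−1)^{k+1} · C(m,k) · (1 − k/m)^r. -/
open Filter

lemma hneg_val (m : ℕ) [NeZero m] (hm : 2 ≤ m) : ((-1 : Fin m) : ℕ) = m - 1 := by
  rw [Fin.coe_neg, Fin.val_one']
  have h1 : 1 % m = 1 := Nat.mod_eq_of_lt (by omega)
  rw [h1, Nat.mod_eq_of_lt (by omega)]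

open Fin.NatCast in
lemma edge_eq (m : ℕ) [NeZero m] (hm : 2 ≤ m) (i : Fin m) :
    (Finset.univ.filter fun v : Fin m => ∃ j < m - 1, (v : ℕ) = ((i : ℕ) + j) % m)
      = Finset.univ.erase (i - 1) := by
  ext v
  simp only [Finset.mem_filter, Finset.mem_univ, true_and, Finset.mem_erase, and_true]
  have key : ∀ j : ℕ, (v : ℕ) = ((i : ℕ) + j) % m ↔ v = i + (j : Fin m) := fun j => by
    rw [Fin.ext_iff, Fin.val_add, Fin.val_natCast, Nat.add_mod_mod]
  constructor
  · rintro ⟨j, hj, hv⟩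
    rw [key] at hv
    subst hv
    intro h
    have h1 : (j : Fin m) = -1 := by rwa [sub_eq_add_neg, add_right_inj] at h
    have h2 : j % m = m - 1 := by
      have := congrArg Fin.val h1
      rwa [Fin.val_natCast, hneg_val m hm] at this
    have h3 : j % m = j := Nat.mod_eq_of_lt (by omega)
    omega
  · intro hv
    refine ⟨((v - i : Fin m) : ℕ), ?_, ?_⟩
    · have h1 : ((v - i : Fin m) : ℕ) < m := Fin.is_lt _
      have h2 : ((v - i : Fin m) : ℕ) ≠ m - 1 := by
        intro h
        apply hv
        have h3 : (v - i : Fin m) = -1 :=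
          Fin.val_injective (h.trans (hneg_val m hm).symm)
        calc v = i + (v - i) := by abel
        _ = i + (-1) := by rw [h3]
        _ = i - 1 := by abel
      omega
    · rw [key, Fin.cast_val_eq_self]
      abel

lemma sigma_iff (m r : ℕ) [NeZero m] (hm : 2 ≤ m) (y : Fin r → Fin m) :
    (∃ e ∈ tightCycle m (m - 1), ∀ i, y i ∈ e) ↔ ¬ Function.Surjective y := by
  rw [Function.Surjective]
  push_neg
  unfold tightCycle
  constructor
  · rintro ⟨e, he, hy⟩
    obtain ⟨i, -, rfl⟩ := Finset.mem_image.mp he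
    rw [edge_eq m hm i] at hy
    exact ⟨i - 1, fun k => (Finset.mem_erase.mp (hy k)).1⟩
  · rintro ⟨w, hw⟩
    refine ⟨Finset.univ.erase ((w + 1) - 1), ?_, ?_⟩
    · exact Finset.mem_image.mpr ⟨w + 1, Finset.mem_univ _, edge_eq m hm (w + 1)⟩
    · intro k
      have : (w + 1) - 1 = w := by abel
      rw [this]
      exact Finset.mem_erase.mpr ⟨hw k, Finset.mem_univ _⟩

open Finset in
lemma count_nonsurj (r m : ℕ) (hr : 1 ≤ r) (hm : 1 ≤ m) :
    (((Finset.univ : Finset (Fin r → Fin m)).filter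
        fun y => ¬ Function.Surjective y).card : ℤ)
      = ∑ k ∈ Finset.Icc 1 (m - 1),
          (-1 : ℤ) ^ (k + 1) * (m.choose k : ℤ) * ((m - k : ℕ) : ℤ) ^ r := by
  classical
  set A : Fin m → Finset (Fin r → Fin m) :=
    fun v => Finset.univ.filter fun y => ∀ k, y k ≠ v with hA
  have hfil : ((Finset.univ : Finset (Fin r → Fin m)).filter
      fun y => ¬ Function.Surjective y) = Finset.univ.biUnion A := by
    ext y
    simp only [mem_filter, mem_univ, true_and, mem_biUnion, A]
    rw [Function.Surjective]
    push_neg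
    simp
  have hinf : ∀ (t : Finset (Fin m)) (ht : t.Nonempty),
      ((t.inf' ht A).card : ℤ) = ((m - t.card : ℕ) : ℤ) ^ r := by
    intro t ht
    have he : t.inf' ht A = Fintype.piFinset (fun _ : Fin r => tᶜ) := by
      ext y
      rw [Finset.inf'_eq_inf, Finset.mem_inf, Fintype.mem_piFinset]
      simp only [A, mem_filter, mem_univ, true_and, mem_compl]
      exact ⟨fun h k hk => h _ hk k rfl, fun h v hv k hyk => h k (hyk ▸ hv)⟩
    rw [he, Fintype.card_piFinset]
    simp [Finset.card_compl]
  set F : Finset (Fin m) → ℤ :=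
    fun t => (-1 : ℤ) ^ (t.card + 1) * ((m - t.card : ℕ) : ℤ) ^ r with hF
  have h2 : ((Finset.univ.biUnion A).card : ℤ)
      = ∑ t ∈ (Finset.univ : Finset (Fin m)).powerset.filter (·.Nonempty), F t := by
    rw [Finset.inclusion_exclusion_card_biUnion (Finset.univ : Finset (Fin m)) A]
    rw [← Finset.sum_attach ((Finset.univ : Finset (Fin m)).powerset.filter (·.Nonempty)) F]
    apply Finset.sum_congr rfl
    intro t _
    rw [hF, hinf]
  have hempty : (Finset.univ : Finset (Fin m)).powerset.filter (fun t => ¬ t.Nonempty) = {∅} := by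
    ext t
    simp [Finset.not_nonempty_iff_eq_empty]
  have h3 : ∑ t ∈ (Finset.univ : Finset (Fin m)).powerset.filter (·.Nonempty), F t
      = (∑ t ∈ (Finset.univ : Finset (Fin m)).powerset, F t) + (m : ℤ) ^ r := by
    have := Finset.sum_filter_add_sum_filter_not
      (Finset.univ : Finset (Fin m)).powerset (·.Nonempty) F
    rw [hempty] at this
    have hFe : F ∅ = -((m : ℤ) ^ r) := by simp [hF]
    rw [Finset.sum_singleton, hFe] at this
    linarith
  have h4 : ∑ t ∈ (Finset.univ : Finset (Fin m)).powerset, F t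
      = ∑ j ∈ Finset.range (m + 1), (m.choose j : ℤ) * ((-1 : ℤ) ^ (j + 1) * ((m - j : ℕ) : ℤ) ^ r) := by
    rw [Finset.sum_powerset]
    rw [Finset.card_univ, Fintype.card_fin]
    apply Finset.sum_congr rfl
    intro j hj
    have : ∀ t ∈ Finset.powersetCard j (Finset.univ : Finset (Fin m)),
        F t = (-1 : ℤ) ^ (j + 1) * ((m - j : ℕ) : ℤ) ^ r := by
      intro t ht
      simp only [hF, (Finset.mem_powersetCard.mp ht).2]
    rw [Finset.sum_congr rfl this, Finset.sum_const, Finset.card_powersetCard,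
      Finset.card_univ, Fintype.card_fin, nsmul_eq_mul]
  -- now assemble
  rw [hfil, h2, h3, h4]
  set G : ℕ → ℤ := fun j => (m.choose j : ℤ) * ((-1 : ℤ) ^ (j + 1) * ((m - j : ℕ) : ℤ) ^ r)
    with hG
  have hlast : G m = 0 := by
    simp [hG, Nat.sub_self, zero_pow (by omega : r ≠ 0)]
  have h5 : ∑ j ∈ Finset.range (m + 1), G j = ∑ j ∈ Finset.range m, G j := by
    rw [Finset.sum_range_succ, hlast, add_zero]
  have h6 : ∑ j ∈ Finset.range m, G j
      = (∑ j ∈ Finset.range (m - 1), G (j + 1)) + G 0 := by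
    conv_lhs => rw [show m = (m - 1) + 1 by omega]
    rw [Finset.sum_range_succ']
  have hG0 : G 0 = -((m : ℤ) ^ r) := by simp [hG]
  have h7 : ∑ k ∈ Finset.Icc 1 (m - 1),
      (-1 : ℤ) ^ (k + 1) * (m.choose k : ℤ) * ((m - k : ℕ) : ℤ) ^ r
      = ∑ j ∈ Finset.range (m - 1), G (j + 1) := by
    rw [show Finset.Icc 1 (m - 1) = Finset.Ico 1 m by
      rw [← Finset.Ico_add_one_right_eq_Icc]; congr 1; omega]
    rw [Finset.sum_Ico_eq_sum_range]
    apply Finset.sum_congr rfl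
    intro j _
    rw [hG, add_comm 1 j]
    ring
  rw [h5, h6, hG0, h7]
  ring
/-- For 3 ≤ m ≤ r, g(C^{m−1}_m, r) ≤ Σ_{k=1}^{m−1} (−1)^{k+1} C(m,k) (1 − k/m)^r. -/
theorem gMin_tightCycle_le' (r m : ℕ) (hr : 3 ≤ r) (hm3 : 3 ≤ m) (hmr : m ≤ r) :
    gMin (tightCycle m (m - 1)) r ≤
      ∑ k ∈ Finset.Icc 1 (m - 1),
        (-1 : ℝ) ^ (k + 1) * (m.choose k : ℝ) * (1 - (k : ℝ) / (m : ℝ)) ^ r := by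
  have hnz : NeZero m := ⟨by omega⟩
  have hmpos : (0 : ℝ) < m := by exact_mod_cast (by omega : 0 < m)
  set H := tightCycle m (m - 1) with hH
  set u : Fin m → ℝ := fun _ => (m : ℝ)⁻¹ with hu
  have husimplex : u ∈ stdSimplex ℝ (Fin m) := by
    constructor
    · intro v
      simp only [u]
      positivity
    · simp only [u, Finset.sum_const, Finset.card_univ, Fintype.card_fin, nsmul_eq_mul]
      field_simp
  have hbdd : BddBelow (gFun H r '' stdSimplex ℝ (Fin m)) := by
    refine ⟨0, ?_⟩
    rintro z ⟨x, hx, rfl⟩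
    unfold gFun
    apply Finset.sum_nonneg
    intro y _
    apply mul_nonneg
    · exact Finset.prod_nonneg fun i _ => hx.1 _
    · split_ifs <;> norm_num
  have hle : gMin H r ≤ gFun H r u := csInf_le hbdd ⟨u, husimplex, rfl⟩
  refine hle.trans_eq ?_
  unfold gFun
  have hprod : ∀ y : Fin r → Fin m, (∏ i, u (y i)) = ((m : ℝ)⁻¹) ^ r := by
    intro y
    simp [u]
  trans (((m : ℝ)⁻¹) ^ r *
      ∑ y : Fin r → Fin m, (if ¬ Function.Surjective y then (1 : ℝ) else 0))
  · rw [Finset.mul_sum]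
    apply Finset.sum_congr rfl
    intro y _
    rw [hprod y]
    simp only [hH, sigma_iff m r (by omega) y]
  rw [Finset.sum_boole]
  have hcount : (((Finset.univ : Finset (Fin r → Fin m)).filter
        fun y => ¬ Function.Surjective y).card : ℝ)
      = ∑ k ∈ Finset.Icc 1 (m - 1),
          (-1 : ℝ) ^ (k + 1) * (m.choose k : ℝ) * ((m - k : ℕ) : ℝ) ^ r := by
    exact_mod_cast count_nonsurj r m (by omega) (by omega)
  rw [hcount, Finset.mul_sum]
  apply Finset.sum_congr rfl
  intro k hk
  have hkm : k ≤ m := by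
    have := (Finset.mem_Icc.mp hk).2
    omega
  have hcast : ((m - k : ℕ) : ℝ) = (m : ℝ) - k := by
    push_cast [hkm]
    ring
  have h1mk : 1 - (k : ℝ) / m = ((m : ℝ) - k) / m := by
    field_simp
  rw [h1mk, div_pow, hcast]
  ring
end
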